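/- arXiv:2601.20392 — 2 statements merged into one kernel-verified Lean document; each statement's English description precedes it below -/
import Mathlib

section
/- For any real numbers C, T, N with T ≥ 1, N ≥ 1, and |C| ≤ N², the sum over integers A with 0 ≤ A ≤ N² of the Lebesgue measure of the set {ξ₁ ∈ ℝ : ||ξ₁|² - A - C| ≤ 1/T and |ξ₁| ≤ N} is bounded by a universal constant times T^{-1/2} + T^{-1}·N. -/
open MeasureTheory

private lemma sqrt_sub_sqrt_le (x y : ℝ) :
    Real.sqrt y - Real.sqrt x ≤ Real.sqrt (y - x) := by
  rcases le_or_gt (y - x) 0 with h | h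
  · have h1 : Real.sqrt (y - x) = 0 := Real.sqrt_eq_zero'.mpr h
    have := Real.sqrt_le_sqrt (by linarith : y ≤ x)
    linarith
  · rcases le_or_gt x 0 with hx | hx
    · have h1 : Real.sqrt x = 0 := Real.sqrt_eq_zero'.mpr hx
      have := Real.sqrt_le_sqrt (by linarith : y ≤ y - x)
      linarith
    · have h2 : Real.sqrt y ≤ Real.sqrt x + Real.sqrt (y - x) := by
        rw [Real.sqrt_le_iff]
        refine ⟨by positivity, ?_⟩
        have e1 : Real.sqrt x ^ 2 = x := Real.sq_sqrt hx.le
        have e2 : Real.sqrt (y - x) ^ 2 = y - x := Real.sq_sqrt h.le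
        nlinarith [mul_nonneg (Real.sqrt_nonneg x) (Real.sqrt_nonneg (y - x))]
      linarith

/-- For `s ≥ 2`, `0 < t ≤ 1`:  `√(s+t) − √(s−t) ≤ 3t(√s − √(s−1))`. -/
private lemma key_ineq (s t : ℝ) (hs : 2 ≤ s) (ht0 : 0 < t) (ht1 : t ≤ 1) :
    Real.sqrt (s + t) - Real.sqrt (s - t) ≤ 3 * t * (Real.sqrt s - Real.sqrt (s - 1)) := by
  set u := Real.sqrt (s + t) with hu
  set v := Real.sqrt (s - t) with hv
  set p := Real.sqrt s with hp
  set q := Real.sqrt (s - 1) with hq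
  have hu2 : u ^ 2 = s + t := Real.sq_sqrt (by linarith)
  have hv2 : v ^ 2 = s - t := Real.sq_sqrt (by linarith)
  have hp2 : p ^ 2 = s := Real.sq_sqrt (by linarith)
  have hq2 : q ^ 2 = s - 1 := Real.sq_sqrt (by linarith)
  have hq1 : 1 ≤ q := Real.one_le_sqrt.mpr (by linarith)
  have hvq : q ≤ v := Real.sqrt_le_sqrt (by linarith)
  have huv : v ≤ u := Real.sqrt_le_sqrt (by linarith)
  have hpq : q ≤ p := Real.sqrt_le_sqrt (by linarith)
  have h2q : p ≤ 2 * q := by nlinarith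
  have hq0 : (0:ℝ) < q := by linarith
  have step1 : u - v ≤ t / q := by
    rw [le_div_iff₀ hq0]
    nlinarith [mul_nonneg (by linarith : (0:ℝ) ≤ u - v) (by linarith : (0:ℝ) ≤ u + v - 2 * q)]
  have step2 : t / q ≤ 3 * t * (p - q) := by
    rw [div_le_iff₀ hq0]
    nlinarith [mul_nonneg (by linarith : (0:ℝ) ≤ p - q) (by linarith : (0:ℝ) ≤ 2 * q - p)]
  linarith

private lemma telescope (g : ℤ → ℝ) (n : ℤ) (hn : 0 ≤ n) :
    ∑ A ∈ Finset.Icc (0:ℤ) n, (g A - g (A - 1)) = g n - g (-1) := by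
  have key : ∀ m : ℕ, ∑ A ∈ Finset.Icc (0:ℤ) (m:ℤ), (g A - g (A - 1)) = g m - g (-1) := by
    intro m
    induction m with
    | zero => simp
    | succ k ih =>
        have h : Finset.Icc (0:ℤ) ((k:ℤ)+1) = insert ((k:ℤ)+1) (Finset.Icc (0:ℤ) k) := by
          ext a; simp only [Finset.mem_Icc, Finset.mem_insert]; omega
        push_cast
        rw [h, Finset.sum_insert (by simp), ih]
        ring_nf
  have := key n.toNat
  rwa [Int.toNat_of_nonneg hn] at this

/-- summed one-dimensional measure estimate. -/
theorem stmt0 :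
    ∃ K > (0:ℝ), ∀ C T N : ℝ, 1 ≤ T → 1 ≤ N → |C| ≤ N^2 →
      ∑ A ∈ Finset.Icc (0:ℤ) ⌊N^2⌋,
          volume {ξ₁ : ℝ | |(|ξ₁|)^2 - (A:ℝ) - C| ≤ 1/T ∧ |ξ₁| ≤ N} ≤
        ENNReal.ofReal (K * (T ^ (-(1:ℝ)/2) + N / T)) := by
  classical
  refine ⟨16, by norm_num, ?_⟩
  intro C T N hT hN hC
  have hT0 : (0:ℝ) < T := by linarith
  have ht0 : (0:ℝ) < 1 / T := by positivity
  have ht1 : 1 / T ≤ 1 := by rw [div_le_one hT0]; exact hT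
  set n : ℤ := ⌊N ^ 2⌋ with hn
  have hn0 : (0:ℤ) ≤ n := by
    rw [hn]; exact Int.le_floor.mpr (by norm_num; nlinarith)
  have hnN : (n : ℝ) ≤ N ^ 2 := Int.floor_le _
  have hCabs : -N ^ 2 ≤ C ∧ C ≤ N ^ 2 := abs_le.mp hC
  set f : ℤ → ℝ := fun A =>
    2 * (Real.sqrt ((A:ℝ) + C + 1 / T) - Real.sqrt ((A:ℝ) + C - 1 / T)) with hf
  have hf_nonneg : ∀ A : ℤ, 0 ≤ f A := by
    intro A
    have := Real.sqrt_le_sqrt (by linarith : (A:ℝ) + C - 1 / T ≤ (A:ℝ) + C + 1 / T)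
    simp only [hf]; linarith
  -- volume bound for each set
  have hvol : ∀ A ∈ Finset.Icc (0:ℤ) n,
      volume {ξ₁ : ℝ | |(|ξ₁|)^2 - (A:ℝ) - C| ≤ 1/T ∧ |ξ₁| ≤ N} ≤
        ENNReal.ofReal (f A) := by
    intro A _
    set a := (A:ℝ) + C - 1 / T with ha'
    set b := (A:ℝ) + C + 1 / T with hb'
    have hsub : {ξ₁ : ℝ | |(|ξ₁|)^2 - (A:ℝ) - C| ≤ 1/T ∧ |ξ₁| ≤ N} ⊆
        Set.Icc (Real.sqrt a) (Real.sqrt b) ∪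
          Set.Icc (-Real.sqrt b) (-Real.sqrt a) := by
      intro ξ hξ
      obtain ⟨h1, _⟩ := hξ
      have hsq : |ξ| ^ 2 = ξ ^ 2 := sq_abs ξ
      obtain ⟨h1a, h1b⟩ := abs_le.mp h1
      have hb : ξ ^ 2 ≤ b := by rw [hb']; nlinarith
      have ha : a ≤ ξ ^ 2 := by rw [ha']; nlinarith
      have habs1 : Real.sqrt a ≤ |ξ| := by
        calc Real.sqrt a ≤ Real.sqrt (ξ ^ 2) := Real.sqrt_le_sqrt ha
          _ = |ξ| := Real.sqrt_sq_eq_abs ξ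
      have habs2 : |ξ| ≤ Real.sqrt b := by
        calc |ξ| = Real.sqrt (ξ ^ 2) := (Real.sqrt_sq_eq_abs ξ).symm
          _ ≤ Real.sqrt b := Real.sqrt_le_sqrt hb
      rcases le_or_gt 0 ξ with hx | hx
      · left
        rw [abs_of_nonneg hx] at habs1 habs2
        exact ⟨habs1, habs2⟩
      · right
        rw [abs_of_neg hx] at habs1 habs2
        exact ⟨by linarith, by linarith⟩
    calc volume {ξ₁ : ℝ | |(|ξ₁|)^2 - (A:ℝ) - C| ≤ 1/T ∧ |ξ₁| ≤ N}
        ≤ volume (Set.Icc (Real.sqrt a) (Real.sqrt b) ∪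
            Set.Icc (-Real.sqrt b) (-Real.sqrt a)) := measure_mono hsub
      _ ≤ volume (Set.Icc (Real.sqrt a) (Real.sqrt b)) +
            volume (Set.Icc (-Real.sqrt b) (-Real.sqrt a)) := measure_union_le _ _
      _ = ENNReal.ofReal (Real.sqrt b - Real.sqrt a) +
            ENNReal.ofReal (-Real.sqrt a - -Real.sqrt b) := by
          rw [Real.volume_Icc, Real.volume_Icc]
      _ ≤ ENNReal.ofReal (f A) := by
          have hd : 0 ≤ Real.sqrt b - Real.sqrt a := by
            have := Real.sqrt_le_sqrt (by rw [ha', hb']; linarith : a ≤ b)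
            linarith
          rw [show -Real.sqrt a - -Real.sqrt b = Real.sqrt b - Real.sqrt a by ring,
            ← ENNReal.ofReal_add hd hd]
          apply ENNReal.ofReal_le_ofReal
          simp only [hf]; rw [ha', hb']; ring_nf; rfl
  -- reduce to a real inequality
  calc ∑ A ∈ Finset.Icc (0:ℤ) n,
        volume {ξ₁ : ℝ | |(|ξ₁|)^2 - (A:ℝ) - C| ≤ 1/T ∧ |ξ₁| ≤ N}
      ≤ ∑ A ∈ Finset.Icc (0:ℤ) n, ENNReal.ofReal (f A) := Finset.sum_le_sum hvol
    _ = ENNReal.ofReal (∑ A ∈ Finset.Icc (0:ℤ) n, f A) :=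
        (ENNReal.ofReal_sum_of_nonneg (fun A _ => hf_nonneg A)).symm
    _ ≤ ENNReal.ofReal (16 * (T ^ (-(1:ℝ)/2) + N / T)) := by
        apply ENNReal.ofReal_le_ofReal
        have hsplit := Finset.sum_filter_add_sum_filter_not (Finset.Icc (0:ℤ) n)
          (fun A : ℤ => ((A:ℝ) + C < 2)) f
        rw [← hsplit]
        set s1 := Finset.filter (fun A : ℤ => ((A:ℝ) + C < 2)) (Finset.Icc (0:ℤ) n) with hs1
        set s2 := Finset.filter (fun A : ℤ => ¬((A:ℝ) + C < 2)) (Finset.Icc (0:ℤ) n) with hs2'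
        have hsqT0 : (0:ℝ) < Real.sqrt T := Real.sqrt_pos.mpr hT0
        have hrpow : T ^ (-(1:ℝ)/2) = 1 / Real.sqrt T := by
          rw [show (-(1:ℝ)/2) = -(1/2) by norm_num, Real.rpow_neg hT0.le,
            ← Real.sqrt_eq_rpow, one_div]
        -- bound on s1
        have hb1 : ∑ A ∈ s1, f A ≤ 9 * T ^ (-(1:ℝ)/2) := by
          set s1' := Finset.filter (fun A : ℤ => (-1:ℝ) ≤ (A:ℝ) + C) s1 with hs1'
          have hzero : ∀ A ∈ s1, A ∉ s1' → f A = 0 := by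
            intro A hA hA'
            have h1 : (A:ℝ) + C < -1 := by
              by_contra h
              exact hA' (Finset.mem_filter.mpr ⟨hA, by linarith⟩)
            have e1 : Real.sqrt ((A:ℝ) + C + 1 / T) = 0 :=
              Real.sqrt_eq_zero'.mpr (by linarith)
            have e2 : Real.sqrt ((A:ℝ) + C - 1 / T) = 0 :=
              Real.sqrt_eq_zero'.mpr (by linarith)
            simp only [hf, e1, e2]; ring
          rw [← Finset.sum_subset (Finset.filter_subset _ _) hzero]
          have hterm : ∀ A ∈ s1', f A ≤ 3 / Real.sqrt T := by
            intro A hA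
            have hdiff := sqrt_sub_sqrt_le ((A:ℝ) + C - 1 / T) ((A:ℝ) + C + 1 / T)
            have e3 : ((A:ℝ) + C + 1 / T) - ((A:ℝ) + C - 1 / T) = 2 / T := by ring
            rw [e3] at hdiff
            have h2T : Real.sqrt (2 / T) ≤ (3/2) / Real.sqrt T := by
              rw [Real.sqrt_div (by norm_num : (0:ℝ) ≤ 2) T]
              gcongr
              nlinarith [Real.sq_sqrt (by norm_num : (0:ℝ) ≤ 2), Real.sqrt_nonneg 2]
            have e4 : 2 * ((3:ℝ)/2 / Real.sqrt T) = 3 / Real.sqrt T := by ring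
            simp only [hf]
            linarith
          calc ∑ A ∈ s1', f A ≤ ∑ A ∈ s1', 3 / Real.sqrt T := Finset.sum_le_sum hterm
            _ = s1'.card * (3 / Real.sqrt T) := by
                rw [Finset.sum_const, nsmul_eq_mul]
            _ ≤ 3 * (3 / Real.sqrt T) := by
                have hcard : s1'.card ≤ 3 := by
                  have hsub : s1' ⊆ Finset.Icc ⌈(-1:ℝ) - C⌉ (⌈(-1:ℝ) - C⌉ + 2) := by
                    intro A hA
                    obtain ⟨hA1, hA2⟩ := Finset.mem_filter.mp hA
                    obtain ⟨hA3, hA4⟩ := Finset.mem_filter.mp hA1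
                    rw [Finset.mem_Icc]
                    have h5 : ((-1:ℝ) - C) ≤ (⌈(-1:ℝ) - C⌉ : ℝ) := Int.le_ceil _
                    constructor
                    · exact Int.ceil_le.mpr (by linarith)
                    · have h6 : (A:ℝ) < ((⌈(-1:ℝ) - C⌉ + 3 : ℤ) : ℝ) := by
                        push_cast; linarith
                      have h7 : A < ⌈(-1:ℝ) - C⌉ + 3 := by exact_mod_cast h6
                      omega
                  calc s1'.card ≤ (Finset.Icc ⌈(-1:ℝ) - C⌉ (⌈(-1:ℝ) - C⌉ + 2)).card :=
                      Finset.card_le_card hsub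
                    _ = 3 := by rw [Int.card_Icc]; omega
                have hc : (s1'.card : ℝ) ≤ 3 := by exact_mod_cast hcard
                have h3T : 0 ≤ 3 / Real.sqrt T := by positivity
                nlinarith
            _ = 9 * T ^ (-(1:ℝ)/2) := by rw [hrpow]; ring
        -- bound on s2
        have hb2 : ∑ A ∈ s2, f A ≤ 9 * (N / T) := by
          set g : ℤ → ℝ := fun A => Real.sqrt ((A:ℝ) + C) with hg
          have hterm2 : ∀ A ∈ s2, f A ≤ 6 / T * (g A - g (A - 1)) := by
            intro A hA
            obtain ⟨_, hA2⟩ := Finset.mem_filter.mp hA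
            have hs2 : (2:ℝ) ≤ (A:ℝ) + C := by linarith [not_lt.mp hA2]
            have hk := key_ineq ((A:ℝ) + C) (1/T) hs2 ht0 ht1
            have e : ((A - 1 : ℤ):ℝ) + C = ((A:ℝ) + C) - 1 := by push_cast; ring
            simp only [hf, hg, e]
            have e2 : 6 / T * (Real.sqrt ((A:ℝ) + C) - Real.sqrt ((A:ℝ) + C - 1)) =
                2 * (3 * (1/T) * (Real.sqrt ((A:ℝ) + C) - Real.sqrt ((A:ℝ) + C - 1))) := by
              field_simp; ring
            rw [e2]
            linarith
          have hgmono : ∀ A : ℤ, 0 ≤ g A - g (A - 1) := by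
            intro A
            have h : Real.sqrt (((A - 1 : ℤ):ℝ) + C) ≤ Real.sqrt ((A:ℝ) + C) :=
              Real.sqrt_le_sqrt (by push_cast; linarith)
            simp only [hg]; linarith
          calc ∑ A ∈ s2, f A ≤ ∑ A ∈ s2, 6 / T * (g A - g (A - 1)) :=
              Finset.sum_le_sum hterm2
            _ ≤ ∑ A ∈ Finset.Icc (0:ℤ) n, 6 / T * (g A - g (A - 1)) := by
                apply Finset.sum_le_sum_of_subset_of_nonneg (Finset.filter_subset _ _)
                intro A _ _
                have h1 := hgmono A
                have h2 : (0:ℝ) ≤ 6 / T := by positivity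
                exact mul_nonneg h2 h1
            _ = 6 / T * (g n - g (-1)) := by
                rw [← Finset.mul_sum, telescope g n hn0]
            _ ≤ 9 * (N / T) := by
                have hgn : g n ≤ 3 / 2 * N := by
                  have h1 : (n:ℝ) + C ≤ 2 * N ^ 2 := by linarith [hCabs.2]
                  have h2 : Real.sqrt ((n:ℝ) + C) ≤ Real.sqrt (2 * N ^ 2) :=
                    Real.sqrt_le_sqrt h1
                  have h3 : Real.sqrt (2 * N ^ 2) ≤ 3 / 2 * N := by
                    rw [Real.sqrt_le_iff]
                    exact ⟨by positivity, by nlinarith⟩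
                  simp only [hg]; linarith
                have hg1 : 0 ≤ g (-1) := Real.sqrt_nonneg _
                have h6 : (0:ℝ) ≤ 6 / T := by positivity
                calc 6 / T * (g n - g (-1)) ≤ 6 / T * (3 / 2 * N) := by
                      apply mul_le_mul_of_nonneg_left _ h6
                      linarith
                  _ = 9 * (N / T) := by field_simp; ring
        have hTpos : 0 ≤ T ^ (-(1:ℝ)/2) := Real.rpow_nonneg hT0.le _
        have hNT : 0 ≤ N / T := by positivity
        linarith
end

section
/- Let n ≥ 2, N ≥ 1, T ≥ 1, and fix C ∈ ℝ with |C| ≤ c·N² for some constant c. Then the measure (product of Lebesgue measure on ℝ and counting measure on ℤⁿ) of the set {ξ = (ξ₁, ξ̃) ∈ ℝ × ℤⁿ : ||ξ|² − C| ≤ 1/T, |ξ| ≤ c·N} is bounded, for every ε > 0, by C_ε N^ε (T^{-1/2} N^{n-2} + T^{-1} N^{n-1}). -/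
open MeasureTheory


lemma aux_pow (u : ℝ) (hu : 0 < u) (a : ℕ) :
    (a + 1 : ℝ) ≤ (3 + 6 / u ^ 2) * (1 + u) ^ a := by
  set q : ℕ := a / 2 with hq
  have hqa : a ≤ 2 * q + 1 := by omega
  have h1 : 1 + (q : ℝ) * (2 * u + u ^ 2) ≤ ((1 + u) ^ 2) ^ q := by
    have h := one_add_mul_le_pow (a := 2 * u + u ^ 2) (by nlinarith) q
    calc 1 + (q : ℝ) * (2 * u + u ^ 2) ≤ (1 + (2 * u + u ^ 2)) ^ q := h
    _ = ((1 + u) ^ 2) ^ q := by ring_nf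
  have h2 : ((1 + u) ^ 2) ^ q = (1 + u) ^ (2 * q) := by rw [← pow_mul]
  have h3 : ((1 + u) ^ 2) ^ q ≤ (1 + u) ^ a := by
    rw [h2]; exact pow_le_pow_right₀ (by linarith) (by omega)
  have h4 : (1 + (q : ℝ) * u ^ 2) ≤ (1 + u) ^ a := by
    calc (1 + (q : ℝ) * u ^ 2) ≤ 1 + (q : ℝ) * (2 * u + u ^ 2) := by
          have : (0:ℝ) ≤ q := Nat.cast_nonneg q
          nlinarith
    _ ≤ _ := le_trans h1 h3
  have hw : (6 / u ^ 2) * u ^ 2 = 6 := by field_simp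
  have hqa' : (a : ℝ) + 1 ≤ 2 * (q : ℝ) + 2 := by exact_mod_cast by omega
  have hq0 : (0:ℝ) ≤ q := Nat.cast_nonneg q
  calc (a + 1 : ℝ) ≤ 2 * (q:ℝ) + 2 := hqa'
  _ ≤ (3 + 6 / u ^ 2) * (1 + (q : ℝ) * u ^ 2) := by nlinarith [sq_nonneg u, div_nonneg (by norm_num : (0:ℝ) ≤ 6) (sq_nonneg u)]
  _ ≤ (3 + 6 / u ^ 2) * (1 + u) ^ a := by
      apply mul_le_mul_of_nonneg_left h4
      have := div_nonneg (by norm_num : (0:ℝ) ≤ 6) (sq_nonneg u); linarith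

lemma divisor_bound (δ : ℝ) (hδ : 0 < δ) :
    ∃ K : ℝ, 1 ≤ K ∧ ∀ m : ℕ, 1 ≤ m → (m.divisors.card : ℝ) ≤ K * (m : ℝ) ^ δ := by
  have h2δ : (1:ℝ) < 2 ^ δ := Real.one_lt_rpow_iff_of_pos (by norm_num) |>.2 (Or.inl ⟨by norm_num, hδ⟩)
  set u₀ : ℝ := 2 ^ δ - 1 with hu₀def
  have hu₀ : 0 < u₀ := by simp [hu₀def]; linarith
  set κ : ℝ := 3 + 6 / u₀ ^ 2 with hκdef
  have hκ1 : 1 ≤ κ := by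
    have := div_nonneg (by norm_num : (0:ℝ) ≤ 6) (sq_nonneg u₀); simp [hκdef]; linarith
  set P : ℕ := ⌈(2:ℝ) ^ (1/δ)⌉₊ with hP
  refine ⟨max 1 (κ ^ (P + 1)), le_max_left _ _, ?_⟩
  intro m hm
  have hm0 : m ≠ 0 := by omega
  rw [Nat.card_divisors hm0]
  -- per-prime bound
  have key : ∀ p ∈ m.primeFactors,
      ((m.factorization p + 1 : ℕ) : ℝ) ≤
        (if p ≤ P then κ else 1) * (((p : ℝ) ^ (m.factorization p : ℕ)) ^ δ) := by
    intro p hp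
    have hpp : p.Prime := Nat.prime_of_mem_primeFactors hp
    have hp2 : (2:ℝ) ≤ p := by exact_mod_cast hpp.two_le
    have hp0 : (0:ℝ) ≤ p := by linarith
    set e : ℕ := m.factorization p
    have hrw : ((p : ℝ) ^ (e : ℕ)) ^ δ = ((p:ℝ) ^ δ) ^ (e:ℕ) := by
      rw [← Real.rpow_natCast ((p:ℝ) ^ δ) e, ← Real.rpow_mul hp0, mul_comm,
        Real.rpow_mul hp0, Real.rpow_natCast]
    rw [hrw]
    by_cases hcase : (2:ℝ) ≤ (p:ℝ) ^ δ
    · have h1 : ((e + 1 : ℕ) : ℝ) ≤ 2 ^ e := by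
        have := Nat.lt_two_pow_self (n := e)
        exact_mod_cast this
      have h2 : (2:ℝ) ^ e ≤ ((p:ℝ) ^ δ) ^ e := pow_le_pow_left₀ (by norm_num) hcase e
      have hif : (1:ℝ) ≤ (if p ≤ P then κ else 1) := by split; exacts [hκ1, le_refl 1]
      calc ((e + 1 : ℕ) : ℝ) ≤ ((p:ℝ) ^ δ) ^ e := h1.trans h2
      _ ≤ _ := by nlinarith [pow_nonneg (le_trans (by norm_num) hcase : (0:ℝ) ≤ (p:ℝ)^δ) e]
    · push_neg at hcase
      have hpP : p ≤ P := by
        have h1 : (p:ℝ) = ((p:ℝ) ^ δ) ^ (1/δ) := by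
          rw [← Real.rpow_mul hp0, mul_one_div, div_self hδ.ne', Real.rpow_one]
        have h2 : (p:ℝ) ≤ (2:ℝ) ^ (1/δ) := by
          rw [h1]
          apply Real.rpow_le_rpow (Real.rpow_nonneg hp0 δ) hcase.le (by positivity)
        have := Nat.le_ceil ((2:ℝ) ^ (1/δ))
        have : (p:ℝ) ≤ (P:ℕ) := h2.trans this
        exact_mod_cast this
      rw [if_pos hpP]
      set u : ℝ := (p:ℝ) ^ δ - 1 with hu
      have hu0 : u₀ ≤ u := by
        have : (2:ℝ) ^ δ ≤ (p:ℝ) ^ δ := Real.rpow_le_rpow (by norm_num) hp2 hδ.le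
        simp [hu, hu₀def]; linarith
      have huu : 0 < u := lt_of_lt_of_le hu₀ hu0
      have := aux_pow u huu e
      have hκu : 3 + 6 / u ^ 2 ≤ κ := by
        rw [hκdef]
        have : 6 / u ^ 2 ≤ 6 / u₀ ^ 2 := by
          apply div_le_div_of_nonneg_left (by norm_num) (by positivity)
          nlinarith
        linarith
      have h1u : (1 + u) = (p:ℝ) ^ δ := by simp [hu]
      push_cast
      calc (e : ℝ) + 1 ≤ (3 + 6 / u ^ 2) * (1 + u) ^ e := this
      _ ≤ κ * ((p:ℝ) ^ δ) ^ e := by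
          rw [h1u]
          apply mul_le_mul_of_nonneg_right hκu (pow_nonneg (by rw [← h1u]; linarith) e)
  have hprodN : (∏ p ∈ m.primeFactors, p ^ m.factorization p) = m := by
    conv_rhs => rw [← Nat.factorization_prod_pow_eq_self hm0]
    rw [Finsupp.prod, Nat.support_factorization]
  have hB : ∏ p ∈ m.primeFactors, ((p:ℝ) ^ (m.factorization p : ℕ)) ^ δ = (m:ℝ) ^ δ := by
    rw [Real.finset_prod_rpow _ _ (fun i _ => by positivity) δ]
    congr 1
    exact_mod_cast congrArg (Nat.cast : ℕ → ℝ) hprodN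
  have hA : (∏ p ∈ m.primeFactors, (if p ≤ P then κ else 1)) ≤ κ ^ (P + 1) := by
    rw [Finset.prod_ite, Finset.prod_const, Finset.prod_const_one, mul_one]
    apply pow_le_pow_right₀ hκ1
    have hsub : (m.primeFactors.filter (fun p => p ≤ P)) ⊆ Finset.range (P+1) := by
      intro p hp
      simp only [Finset.mem_filter] at hp
      exact Finset.mem_range.mpr (by omega)
    exact Finset.card_le_card hsub |>.trans (by rw [Finset.card_range])
  calc ((∏ p ∈ m.primeFactors, (m.factorization p + 1) : ℕ) : ℝ)
      = ∏ p ∈ m.primeFactors, ((m.factorization p + 1 : ℕ) : ℝ) := by push_cast; ring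
  _ ≤ ∏ p ∈ m.primeFactors, ((if p ≤ P then κ else 1) * (((p:ℝ) ^ (m.factorization p : ℕ)) ^ δ)) := by
      apply Finset.prod_le_prod (fun p hp => by positivity) key
  _ = (∏ p ∈ m.primeFactors, (if p ≤ P then κ else 1)) *
        ∏ p ∈ m.primeFactors, ((p:ℝ) ^ (m.factorization p : ℕ)) ^ δ := Finset.prod_mul_distrib
  _ ≤ (max 1 (κ ^ (P+1))) * (m:ℝ) ^ δ := by
      rw [hB]
      apply mul_le_mul_of_nonneg_right (hA.trans (le_max_right _ _)) (by positivity)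


lemma sq_le_bounds {a m : ℤ} (h : a^2 ≤ m) : -m ≤ a ∧ a ≤ m := by
  have h0 : 0 ≤ m := le_trans (sq_nonneg a) h
  constructor
  · rcases le_or_gt 0 a with ha | ha
    · linarith
    · have : -a ≤ (-a)^2 := by nlinarith
      nlinarith
  · rcases le_or_gt a 0 with ha | ha
    · linarith
    · have : a ≤ a^2 := by nlinarith
      linarith

noncomputable def repSet (m : ℕ) : Finset (ℤ × ℤ) :=
  (Finset.Icc (-(m:ℤ)) m ×ˢ Finset.Icc (-(m:ℤ)) m).filter fun p => p.1^2 + p.2^2 = (m:ℤ)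

lemma mem_repSet {m : ℕ} {p : ℤ × ℤ} : p ∈ repSet m ↔ p.1^2 + p.2^2 = (m:ℤ) := by
  constructor
  · exact fun h => (Finset.mem_filter.mp h).2
  · intro h
    refine Finset.mem_filter.mpr ⟨?_, h⟩
    rw [Finset.mem_product]
    have h1 := sq_le_bounds (a := p.1) (m := (m:ℤ)) (by nlinarith [sq_nonneg p.2])
    have h2 := sq_le_bounds (a := p.2) (m := (m:ℤ)) (by nlinarith [sq_nonneg p.1])
    exact ⟨Finset.mem_Icc.mpr h1, Finset.mem_Icc.mpr h2⟩

lemma repSet_two_mul (m' : ℕ) : (repSet (2 * m')).card = (repSet m').card := by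
  symm
  apply Finset.card_bij (fun q _ => (q.1 + q.2, q.1 - q.2))
  · intro q hq
    rw [mem_repSet] at hq ⊢
    push_cast
    ring_nf
    ring_nf at hq
    linarith
  · intro q hq q' hq' h
    have h1 : q.1 + q.2 = q'.1 + q'.2 := congrArg Prod.fst h
    have h2 : q.1 - q.2 = q'.1 - q'.2 := congrArg Prod.snd h
    have : q.1 = q'.1 := by linarith
    have : q.2 = q'.2 := by linarith
    exact Prod.ext ‹q.1 = q'.1› ‹q.2 = q'.2›
  · intro p hp
    rw [mem_repSet] at hp
    have heven : Even ((p.1 + p.2)^2) := by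
      refine ⟨(m':ℤ) + p.1 * p.2, by push_cast at hp ⊢; linear_combination hp⟩
    have heven1 : Even (p.1 + p.2) := (Int.even_pow.mp heven).1
    obtain ⟨u, hu⟩ := heven1
    have heven2 : Even (p.1 - p.2) := by
      refine ⟨u - p.2, by linarith⟩
    obtain ⟨v, hv⟩ := heven2
    refine ⟨(u, v), ?_, ?_⟩
    · rw [mem_repSet]
      have hp1 : p.1 = u + v := by linarith
      have hp2 : p.2 = u - v := by linarith
      push_cast at hp
      rw [hp1, hp2] at hp
      push_cast
      linarith [hp]
    · have hp1 : p.1 = u + v := by linarith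
      have hp2 : p.2 = u - v := by linarith
      exact Prod.ext hp1.symm hp2.symm

lemma rep_cases {m : ℤ} (hm : 1 ≤ m) {a b c d : ℤ} (h1 : a^2 + b^2 = m) (h2 : c^2 + d^2 = m)
    (hab : IsCoprime a b) (hdvd : m ∣ a * d - b * c) :
    (c, d) = (a, b) ∨ (c, d) = (-a, -b) ∨ (c, d) = (-b, a) ∨ (c, d) = (b, -a) := by
  obtain ⟨k, hk⟩ := hdvd
  have hid : (a*d - b*c)^2 + (a*c + b*d)^2 = m^2 := by linear_combination (c^2+d^2) * h1 + m * h2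
  rw [hk] at hid
  have hm2 : (1:ℤ) ≤ m^2 := by nlinarith
  have hk2 : k^2 ≤ 1 := by nlinarith [sq_nonneg (a*c+b*d)]
  have hkl : -1 ≤ k := by nlinarith [sq_nonneg (k+1)]
  have hku : k ≤ 1 := by nlinarith [sq_nonneg (k-1)]
  -- helper for t^2 = 1
  have tsq : ∀ t : ℤ, t^2 = 1 → t = 1 ∨ t = -1 := by
    intro t ht
    have : (t - 1) * (t + 1) = 0 := by linear_combination ht
    rcases mul_eq_zero.mp this with h | h
    · left; linarith
    · right; linarith
  interval_cases k
  · -- a*d - b*c = -m, so a*c + b*d = 0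
    have hsum : a*c + b*d = 0 := by
      have h0 : (a*c + b*d)^2 = 0 := by linear_combination hid
      exact sq_eq_zero_iff.mp h0
    have hbc : b ∣ c := by
      refine (hab.symm).dvd_of_dvd_mul_left ⟨-d, by linarith⟩
    obtain ⟨t, ht⟩ := hbc
    by_cases hb : b = 0
    · have ha : IsUnit a := isCoprime_zero_right.mp (hb ▸ hab)
      have hc0 : c = 0 := by
        rcases Int.isUnit_iff.mp ha with h | h <;> subst h <;> rw [hb] at hsum <;> linarith
      have hd2 : d^2 = m := by rw [hc0] at h2; linarith
      have ha2 : a^2 = m := by rw [hb] at h1; linarith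
      rcases Int.isUnit_iff.mp ha with h | h <;> subst h <;>
        simp only [one_pow, neg_one_sq] at ha2 <;>
        rcases tsq d (by omega) with h' | h' <;> subst h' <;> subst hb <;> simp <;> omega
    · have hd : d = -(a * t) := by
        have h0 : b * (d + a * t) = 0 := by subst ht; linarith
        have := (mul_eq_zero.mp h0).resolve_left hb
        linarith
      have ht1 : t = 1 ∨ t = -1 := by
        apply tsq
        have hmm : m * t^2 = m := by subst ht hd; linear_combination h2 - t^2 * h1
        have := hm
        nlinarith
      rcases ht1 with h | h <;> subst h <;> subst ht <;> rw [hd] <;> simp <;> constructor <;> ring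
  · -- a*d = b*c
    have hadbc : a * d = b * c := by linarith [hk]
    have hbd : b ∣ d := by
      refine (hab.symm).dvd_of_dvd_mul_left ⟨c, by linarith⟩
    obtain ⟨t, ht⟩ := hbd
    by_cases hb : b = 0
    · have ha : IsUnit a := isCoprime_zero_right.mp (hb ▸ hab)
      have hd0 : d = 0 := by
        rcases Int.isUnit_iff.mp ha with h | h <;> subst h <;> rw [hb] at hadbc <;> linarith
      have hc2 : c^2 = m := by rw [hd0] at h2; linarith
      have ha2 : a^2 = m := by rw [hb] at h1; linarith
      rcases Int.isUnit_iff.mp ha with h | h <;> subst h <;>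
        simp only [one_pow, neg_one_sq] at ha2 <;>
        rcases tsq c (by omega) with h' | h' <;> subst h' <;> subst hb <;> subst hd0 <;> simp <;> omega
    · have hc : c = a * t := by
        have h0 : b * (a * t - c) = 0 := by subst ht; linarith
        have := (mul_eq_zero.mp h0).resolve_left hb
        linarith
      have ht1 : t = 1 ∨ t = -1 := by
        apply tsq
        have hmm : m * t^2 = m := by subst ht hc; linear_combination h2 - t^2 * h1
        nlinarith
      rcases ht1 with h | h <;> subst h <;> subst ht <;> rw [hc] <;> simp
  · -- a*d - b*c = m, so a*c + b*d = 0
    have hsum : a*c + b*d = 0 := by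
      have h0 : (a*c + b*d)^2 = 0 := by linear_combination hid
      exact sq_eq_zero_iff.mp h0
    have hbc : b ∣ c := by
      refine (hab.symm).dvd_of_dvd_mul_left ⟨-d, by linarith⟩
    obtain ⟨t, ht⟩ := hbc
    by_cases hb : b = 0
    · have ha : IsUnit a := isCoprime_zero_right.mp (hb ▸ hab)
      have hc0 : c = 0 := by
        rcases Int.isUnit_iff.mp ha with h | h <;> subst h <;> rw [hb] at hsum <;> linarith
      have hd2 : d^2 = m := by rw [hc0] at h2; linarith
      have ha2 : a^2 = m := by rw [hb] at h1; linarith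
      rcases Int.isUnit_iff.mp ha with h | h <;> subst h <;>
        simp only [one_pow, neg_one_sq] at ha2 <;>
        rcases tsq d (by omega) with h' | h' <;> subst h' <;> subst hb <;> simp <;> omega
    · have hd : d = -(a * t) := by
        have h0 : b * (d + a * t) = 0 := by subst ht; linarith
        have := (mul_eq_zero.mp h0).resolve_left hb
        linarith
      have ht1 : t = 1 ∨ t = -1 := by
        apply tsq
        have hmm : m * t^2 = m := by subst ht hd; linear_combination h2 - t^2 * h1
        nlinarith
      rcases ht1 with h | h <;> subst h <;> subst ht <;> rw [hd] <;> simp <;> constructor <;> ring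


lemma roots_card (m : ℕ) (hm : 1 ≤ m) (hodd : Odd m) :
    haveI : NeZero m := ⟨by omega⟩
    (Finset.univ.filter (fun s : ZMod m => s^2 = -1)).card ≤ m.divisors.card := by
  haveI : NeZero m := ⟨by omega⟩
  set R := Finset.univ.filter (fun s : ZMod m => s^2 = -1) with hR
  rcases R.eq_empty_or_nonempty with h | ⟨s, hs⟩
  · simp [h]
  have root_dvd : ∀ t : ZMod m, t ∈ R → (m:ℤ) ∣ (t.val : ℤ)^2 + 1 := by
    intro t ht
    rw [hR, Finset.mem_filter] at ht
    have htc : ((t.val : ℕ) : ZMod m) = t := by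
      rw [ZMod.natCast_val, ZMod.cast_id]
    rw [← ZMod.intCast_zmod_eq_zero_iff_dvd]
    push_cast
    rw [htc, ht.2]
    ring
  have hsd := root_dvd s hs
  -- the injection
  set sv : ℤ := (s.val : ℤ) with hsv
  apply Finset.card_le_card_of_injOn (fun t => Int.gcd (m:ℤ) (sv - (t.val : ℤ)))
  · intro t ht
    rw [Finset.mem_coe, Nat.mem_divisors]
    constructor
    · have : ((Int.gcd (m:ℤ) (sv - (t.val:ℤ)) : ℕ) : ℤ) ∣ (m:ℤ) := (Int.gcd_dvd_left _ _)
      exact_mod_cast this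
    · omega
  · -- injectivity
    intro t ht t' ht' heq
    simp only [Finset.mem_coe] at ht ht'
    -- common facts builder
    have key : ∀ u : ZMod m, u ∈ R → ∀ D : ℕ, D = Int.gcd (m:ℤ) (sv - (u.val:ℤ)) →
        ((D:ℤ) ∣ sv - (u.val:ℤ)) ∧ (((m:ℤ)/(D:ℤ)) ∣ sv + (u.val:ℤ)) := by
      intro u hu D hD
      have hud := root_dvd u hu
      have hD0 : 0 < Int.gcd (m:ℤ) (sv - (u.val:ℤ)) := by
        rcases Nat.eq_zero_or_pos (Int.gcd (m:ℤ) (sv - (u.val:ℤ))) with h0 | h0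
        · exfalso
          have := Int.gcd_eq_zero_iff.mp h0
          have : (m:ℤ) = 0 := this.1
          omega
        · exact h0
      have hdx : (D:ℤ) ∣ sv - (u.val:ℤ) := hD ▸ (Int.gcd_dvd_right _ _)
      have hdm : (D:ℤ) ∣ (m:ℤ) := hD ▸ (Int.gcd_dvd_left _ _)
      refine ⟨hdx, ?_⟩
      have hxy : (m:ℤ) ∣ (sv - (u.val:ℤ)) * (sv + (u.val:ℤ)) := by
        have : (sv - (u.val:ℤ)) * (sv + (u.val:ℤ)) = (sv^2 + 1) - ((u.val:ℤ)^2 + 1) := by ring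
        rw [this]
        exact dvd_sub hsd hud
      have hco : Int.gcd ((m:ℤ)/(D:ℤ)) ((sv - (u.val:ℤ))/(D:ℤ)) = 1 := by
        rw [hD]
        exact Int.gcd_div_gcd_div_gcd hD0
      have hDne : (D:ℤ) ≠ 0 := by
        have : (0:ℕ) < D := hD ▸ hD0
        exact_mod_cast this.ne'
      obtain ⟨m₁, hm₁⟩ := hdm
      obtain ⟨x₁, hx₁⟩ := hdx
      have hm₁' : (m:ℤ)/(D:ℤ) = m₁ := by rw [hm₁]; exact Int.mul_ediv_cancel_left m₁ hDne
      have hx₁' : (sv - (u.val:ℤ))/(D:ℤ) = x₁ := by rw [hx₁]; exact Int.mul_ediv_cancel_left x₁ hDne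
      rw [hm₁', hx₁'] at hco
      rw [hm₁']
      have h1 : m₁ ∣ x₁ * (sv + (u.val:ℤ)) := by
        have : (D:ℤ) * m₁ ∣ (D:ℤ) * (x₁ * (sv + (u.val:ℤ))) := by
          rw [← hm₁, ← mul_assoc, ← hx₁]
          exact hxy
        exact (mul_dvd_mul_iff_left hDne).mp this
      exact (Int.isCoprime_iff_gcd_eq_one.mpr hco).dvd_of_dvd_mul_left h1
    set D : ℕ := Int.gcd (m:ℤ) (sv - (t.val:ℤ)) with hDdef
    have h1 := key t ht D rfl
    have h2 := key t' ht' D (by rw [hDdef]; exact heq)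
    -- coprimality of D and m/D
    have hdm : (D:ℤ) ∣ (m:ℤ) := (Int.gcd_dvd_left _ _)
    have hD0 : 0 < D := by
      rcases Nat.eq_zero_or_pos D with h0 | h0
      · exfalso
        have := (Int.gcd_eq_zero_iff.mp h0).1
        omega
      · exact h0
    have hcoD : IsCoprime (D:ℤ) ((m:ℤ)/(D:ℤ)) := by
      rw [Int.isCoprime_iff_gcd_eq_one]
      by_contra hne
      -- let g = gcd, g > 1 divides 2*sv and m, m odd => g | sv => g | 1
      set g : ℕ := Int.gcd (D:ℤ) ((m:ℤ)/(D:ℤ)) with hg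
      have hgD : (g:ℤ) ∣ (D:ℤ) := (Int.gcd_dvd_left _ _)
      have hgm1 : (g:ℤ) ∣ ((m:ℤ)/(D:ℤ)) := (Int.gcd_dvd_right _ _)
      have hg2sv : (g:ℤ) ∣ 2*sv := by
        have hx : (g:ℤ) ∣ sv - (t.val:ℤ) := hgD.trans h1.1
        have hy : (g:ℤ) ∣ sv + (t.val:ℤ) := hgm1.trans h1.2
        have : 2*sv = (sv - (t.val:ℤ)) + (sv + (t.val:ℤ)) := by ring
        rw [this]; exact dvd_add hx hy
      have hgm : (g:ℤ) ∣ (m:ℤ) := hgD.trans hdm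
      have hgodd : ¬ (2 ∣ g) := by
        intro h2g
        have : (2:ℕ) ∣ m := h2g.trans (by exact_mod_cast hgm)
        rw [Nat.odd_iff] at hodd
        omega
      have hgcop2 : IsCoprime (g:ℤ) 2 := by
        rw [Int.isCoprime_iff_gcd_eq_one]
        have := (Nat.Prime.coprime_iff_not_dvd Nat.prime_two).mpr hgodd
        have h22 : Int.gcd (g:ℤ) 2 = Nat.gcd g 2 := by
          simp [Int.gcd]
        rw [h22]
        exact Nat.coprime_comm.mp this
      have hgsv : (g:ℤ) ∣ sv := hgcop2.dvd_of_dvd_mul_left hg2sv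
      have hg1 : (g:ℤ) ∣ 1 := by
        have : (g:ℤ) ∣ sv^2 + 1 := hgm.trans hsd
        have h2' : (g:ℤ) ∣ sv^2 := hgsv.mul_left sv |>.trans (by rw [sq])
        have := dvd_sub this h2'
        simpa using this
      have : g = 1 := by
        have := Int.eq_one_of_dvd_one (by positivity) hg1
        exact_mod_cast this
      exact hne this
    -- D | tv - tv', m/D | tv - tv'
    have hdt : (D:ℤ) ∣ ((t'.val:ℤ) - (t.val:ℤ)) := by
      have := dvd_sub h1.1 h2.1
      simpa using this
    have hmt : ((m:ℤ)/(D:ℤ)) ∣ ((t.val:ℤ) - (t'.val:ℤ)) := by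
      have := dvd_sub h1.2 h2.2
      simpa using this
    have hfull : (m:ℤ) ∣ ((t.val:ℤ) - (t'.val:ℤ)) := by
      have hdt' : (D:ℤ) ∣ ((t.val:ℤ) - (t'.val:ℤ)) := by
        have h := hdt
        have : ((t.val:ℤ) - (t'.val:ℤ)) = -(((t'.val:ℤ) - (t.val:ℤ))) := by ring
        rw [this]
        exact Dvd.dvd.neg_right h
      have hmul := hcoD.mul_dvd hdt' hmt
      have hDm : (D:ℤ) * ((m:ℤ)/(D:ℤ)) = (m:ℤ) := by
        rw [mul_comm]; exact Int.ediv_mul_cancel hdm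
      rw [hDm] at hmul
      exact hmul
    have hzero : (t.val:ℤ) - (t'.val:ℤ) = 0 := by
      apply Int.eq_zero_of_abs_lt_dvd hfull
      have h1' := ZMod.val_lt t
      have h2' := ZMod.val_lt t'
      rw [abs_lt]
      constructor <;> [push_cast; push_cast] <;> omega
    have : t.val = t'.val := by omega
    exact ZMod.val_injective m this

noncomputable def primSet (m : ℕ) : Finset (ℤ × ℤ) := (repSet m).filter fun p => Int.gcd p.1 p.2 = 1

lemma unit_snd {m : ℕ} [NeZero m] {p : ℤ × ℤ} (hp : p ∈ primSet m) :
    IsUnit ((p.2 : ℤ) : ZMod m) := by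
  obtain ⟨hrep, hcop⟩ := Finset.mem_filter.mp hp
  rw [mem_repSet] at hrep
  have hab : IsCoprime p.1 p.2 := Int.isCoprime_iff_gcd_eq_one.mpr hcop
  have h1 : IsCoprime p.2 (p.1^2) := (hab.symm).pow_right
  have h2 : IsCoprime p.2 (p.1^2 + p.2 * p.2) := h1.add_mul_left_right p.2
  have h3 : IsCoprime p.2 (m:ℤ) := by
    rw [← hrep]; convert h2 using 2; ring
  have h4 := h3.map (Int.castRingHom (ZMod m))
  simp only [Int.coe_castRingHom, map_intCast] at h4
  rw [show (((m:ℤ)) : ZMod m) = 0 by push_cast; exact ZMod.natCast_self m] at h4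
  exact isCoprime_zero_right.mp h4

lemma primSet_card (m : ℕ) (hm : 1 ≤ m) (hodd : Odd m) :
    (primSet m).card ≤ 4 * m.divisors.card := by
  haveI : NeZero m := ⟨by omega⟩
  classical
  set f : ℤ × ℤ → ZMod m := fun p => (p.1 : ZMod m) * ((p.2 : ZMod m))⁻¹ with hf
  have hmm : ((m:ℕ) : ZMod m) = 0 := ZMod.natCast_self m
  -- image in roots
  have himage : ∀ p ∈ primSet m, (f p)^2 = -1 := by
    intro p hp
    have hu := unit_snd hp
    have hbb : ((p.2 : ZMod m)) * ((p.2 : ZMod m))⁻¹ = 1 := ZMod.mul_inv_of_unit _ hu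
    obtain ⟨hrep, _⟩ := Finset.mem_filter.mp hp
    rw [mem_repSet] at hrep
    have ha2 : ((p.1 : ZMod m))^2 = -((p.2 : ZMod m))^2 := by
      have : (((p.1^2 + p.2^2 : ℤ)) : ZMod m) = 0 := by
        rw [hrep]; push_cast; exact hmm
      push_cast at this
      linear_combination this
    show ((p.1 : ZMod m) * ((p.2 : ZMod m))⁻¹)^2 = -1
    calc ((p.1 : ZMod m) * ((p.2 : ZMod m))⁻¹)^2
        = ((p.1 : ZMod m))^2 * (((p.2 : ZMod m))⁻¹)^2 := by ring
    _ = -(((p.2 : ZMod m)) * ((p.2 : ZMod m))⁻¹)^2 := by rw [ha2]; ring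
    _ = -1 := by rw [hbb]; ring
  -- fibers at most 4
  have hfib : ∀ b ∈ (primSet m).image f, ((primSet m).filter (fun p => f p = b)).card ≤ 4 := by
    intro b hb
    obtain ⟨p₀, hp₀, hfp₀⟩ := Finset.mem_image.mp hb
    obtain ⟨hrep₀, hcop₀⟩ := Finset.mem_filter.mp hp₀
    rw [mem_repSet] at hrep₀
    have hab₀ : IsCoprime p₀.1 p₀.2 := Int.isCoprime_iff_gcd_eq_one.mpr hcop₀
    have hsub : (primSet m).filter (fun p => f p = b) ⊆
        ({p₀, (-p₀.1, -p₀.2), (-p₀.2, p₀.1), (p₀.2, -p₀.1)} : Finset (ℤ × ℤ)) := by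
      intro p hp
      obtain ⟨hpm, hfp⟩ := Finset.mem_filter.mp hp
      obtain ⟨hrep, _⟩ := Finset.mem_filter.mp hpm
      rw [mem_repSet] at hrep
      have hu := unit_snd hpm
      have hu₀ := unit_snd hp₀
      have heqf : f p = f p₀ := by rw [hfp, hfp₀]
      have had : (p₀.1 : ZMod m) * (p.2 : ZMod m) = (p.1 : ZMod m) * (p₀.2 : ZMod m) := by
        have hbb : ((p₀.2 : ZMod m)) * ((p₀.2 : ZMod m))⁻¹ = 1 := ZMod.mul_inv_of_unit _ hu₀
        have hdd : ((p.2 : ZMod m)) * ((p.2 : ZMod m))⁻¹ = 1 := ZMod.mul_inv_of_unit _ hu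
        have h : (p.1 : ZMod m) * ((p.2 : ZMod m))⁻¹ = (p₀.1 : ZMod m) * ((p₀.2 : ZMod m))⁻¹ := heqf
        calc (p₀.1 : ZMod m) * (p.2 : ZMod m)
            = (p₀.1 : ZMod m) * (p.2 : ZMod m) * ((p₀.2 : ZMod m) * ((p₀.2 : ZMod m))⁻¹) := by
              rw [hbb, mul_one]
        _ = ((p₀.1 : ZMod m) * ((p₀.2 : ZMod m))⁻¹) * (p.2 : ZMod m) * (p₀.2 : ZMod m) := by ring
        _ = ((p.1 : ZMod m) * ((p.2 : ZMod m))⁻¹) * (p.2 : ZMod m) * (p₀.2 : ZMod m) := by rw [h]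
        _ = (p.1 : ZMod m) * (p₀.2 : ZMod m) * ((p.2 : ZMod m) * ((p.2 : ZMod m))⁻¹) := by ring
        _ = (p.1 : ZMod m) * (p₀.2 : ZMod m) := by rw [hdd, mul_one]
      have hdvd : (m:ℤ) ∣ p₀.1 * p.2 - p₀.2 * p.1 := by
        have : ((p₀.1 * p.2 - p₀.2 * p.1 : ℤ) : ZMod m) = 0 := by
          push_cast
          rw [show ((p₀.1 : ZMod m) * (p.2 : ZMod m) - (p₀.2 : ZMod m) * (p.1 : ZMod m)) =
            ((p₀.1 : ZMod m) * (p.2 : ZMod m) - (p.1 : ZMod m) * (p₀.2 : ZMod m)) by ring, had]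
          ring
        exact_mod_cast (ZMod.intCast_zmod_eq_zero_iff_dvd _ m).mp this
      have hm1 : (1:ℤ) ≤ (m:ℤ) := by exact_mod_cast hm
      have := rep_cases hm1 hrep₀ hrep hab₀ hdvd
      have hpeta : p = (p.1, p.2) := rfl
      simp only [Finset.mem_insert, Finset.mem_singleton]
      rcases this with h | h | h | h
      · left; rw [hpeta, h]
      · right; left; rw [hpeta, h]
      · right; right; left; rw [hpeta, h]
      · right; right; right; rw [hpeta, h]
    calc ((primSet m).filter (fun p => f p = b)).card
        ≤ ({p₀, (-p₀.1, -p₀.2), (-p₀.2, p₀.1), (p₀.2, -p₀.1)} : Finset (ℤ × ℤ)).card :=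
          Finset.card_le_card hsub
    _ ≤ 4 := by
        have h1 := Finset.card_insert_le p₀ ({(-p₀.1, -p₀.2), (-p₀.2, p₀.1), (p₀.2, -p₀.1)} : Finset (ℤ × ℤ))
        have h2 := Finset.card_insert_le ((-p₀.1, -p₀.2)) ({(-p₀.2, p₀.1), (p₀.2, -p₀.1)} : Finset (ℤ × ℤ))
        have h3 := Finset.card_insert_le ((-p₀.2, p₀.1)) ({(p₀.2, -p₀.1)} : Finset (ℤ × ℤ))
        simp only [Finset.card_singleton] at h1 h2 h3
        omega
  have hmain := Finset.card_le_mul_card_image (f := f) (primSet m) 4 hfib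
  have himsub : (primSet m).image f ⊆ Finset.univ.filter (fun s : ZMod m => s^2 = -1) := by
    intro b hb
    obtain ⟨p, hp, hfp⟩ := Finset.mem_image.mp hb
    rw [Finset.mem_filter]
    exact ⟨Finset.mem_univ _, hfp ▸ himage p hp⟩
  calc (primSet m).card ≤ 4 * ((primSet m).image f).card := hmain
  _ ≤ 4 * (Finset.univ.filter (fun s : ZMod m => s^2 = -1)).card :=
      Nat.mul_le_mul_left 4 (Finset.card_le_card himsub)
  _ ≤ 4 * m.divisors.card := Nat.mul_le_mul_left 4 (roots_card m hm hodd)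

lemma repSet_decomp (m : ℕ) (hm : 1 ≤ m) (hodd : Odd m) :
    (repSet m).card ≤ 4 * m.divisors.card ^ 2 := by
  classical
  have hm0 : m ≠ 0 := by omega
  set D : Finset ℕ := m.divisors.filter (fun g => g^2 ∣ m) with hD
  have hmap : ∀ p ∈ repSet m, Int.gcd p.1 p.2 ∈ D := by
    intro p hp
    rw [mem_repSet] at hp
    set g : ℕ := Int.gcd p.1 p.2 with hg
    have hga : (g:ℤ) ∣ p.1 := (Int.gcd_dvd_left _ _)
    have hgb : (g:ℤ) ∣ p.2 := (Int.gcd_dvd_right _ _)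
    have hg2 : ((g^2 : ℕ) : ℤ) ∣ (m:ℤ) := by
      push_cast
      rw [← hp]
      exact dvd_add (pow_dvd_pow_of_dvd hga 2) (pow_dvd_pow_of_dvd hgb 2)
    have hg2' : g^2 ∣ m := by exact_mod_cast hg2
    have hgne : g ≠ 0 := by
      intro h0
      rw [hg] at h0
      obtain ⟨h1, h2⟩ := Int.gcd_eq_zero_iff.mp h0
      rw [h1, h2] at hp
      simp at hp
      omega
    rw [hD, Finset.mem_filter, Nat.mem_divisors]
    exact ⟨⟨dvd_trans (dvd_pow_self g (by norm_num)) hg2', hm0⟩, hg2'⟩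
  rw [Finset.card_eq_sum_card_fiberwise hmap]
  have hfib : ∀ g ∈ D, ((repSet m).filter (fun p => Int.gcd p.1 p.2 = g)).card ≤ 4 * m.divisors.card := by
    intro g hgD
    rw [hD, Finset.mem_filter, Nat.mem_divisors] at hgD
    obtain ⟨⟨hgdvd, _⟩, hg2⟩ := hgD
    have hgne : g ≠ 0 := by rintro rfl; simp at hg2; omega
    set m' : ℕ := m / g^2 with hm'
    have hmm' : m = g^2 * m' := by rw [hm']; exact (Nat.mul_div_cancel' hg2).symm
    have hm'1 : 1 ≤ m' := Nat.one_le_iff_ne_zero.mpr (by rintro h; rw [h, mul_zero] at hmm'; omega)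
    have hm'odd : Odd m' := (Nat.odd_mul.mp (hmm' ▸ hodd)).2
    -- injection into primSet m'
    have hinj : ((repSet m).filter (fun p => Int.gcd p.1 p.2 = g)).card ≤ (primSet m').card := by
      apply Finset.card_le_card_of_injOn (fun p : ℤ × ℤ => (p.1 / (g:ℤ), p.2 / (g:ℤ)))
      · intro p hp
        obtain ⟨hpm, hpg⟩ := Finset.mem_filter.mp hp
        rw [mem_repSet] at hpm
        have hga : (g:ℤ) ∣ p.1 := hpg ▸ (Int.gcd_dvd_left _ _)
        have hgb : (g:ℤ) ∣ p.2 := hpg ▸ (Int.gcd_dvd_right _ _)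
        obtain ⟨a', ha'⟩ := hga
        obtain ⟨b', hb'⟩ := hgb
        have hgz : (g:ℤ) ≠ 0 := by exact_mod_cast hgne
        have hda : p.1 / (g:ℤ) = a' := by rw [ha']; exact Int.mul_ediv_cancel_left a' hgz
        have hdb : p.2 / (g:ℤ) = b' := by rw [hb']; exact Int.mul_ediv_cancel_left b' hgz
        simp only [Finset.mem_coe]
        rw [primSet, Finset.mem_filter]
        constructor
        · rw [mem_repSet]
          simp only [hda, hdb]
          have : (g:ℤ)^2 * (a'^2 + b'^2) = (g:ℤ)^2 * (m':ℤ) := by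
            have hc : ((m:ℕ):ℤ) = (g:ℤ)^2 * (m':ℤ) := by exact_mod_cast congrArg (Nat.cast : ℕ → ℤ) hmm'
            rw [← hc, ← hpm, ha', hb']
            ring
          have hg2z : ((g:ℤ))^2 ≠ 0 := pow_ne_zero 2 hgz
          have := mul_left_cancel₀ hg2z this
          exact this
        · simp only [hda, hdb]
          have h0 : 0 < Int.gcd p.1 p.2 := by rw [hpg]; omega
          have := Int.gcd_div_gcd_div_gcd h0
          rw [hpg] at this
          rw [hda, hdb] at this
          exact this
      · intro p hp q hq heq
        obtain ⟨hpm, hpg⟩ := Finset.mem_filter.mp hp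
        obtain ⟨hqm, hqg⟩ := Finset.mem_filter.mp hq
        have hga : (g:ℤ) ∣ p.1 := hpg ▸ (Int.gcd_dvd_left _ _)
        have hgb : (g:ℤ) ∣ p.2 := hpg ▸ (Int.gcd_dvd_right _ _)
        have hqa : (g:ℤ) ∣ q.1 := hqg ▸ (Int.gcd_dvd_left _ _)
        have hqb : (g:ℤ) ∣ q.2 := hqg ▸ (Int.gcd_dvd_right _ _)
        have h1 : p.1 / (g:ℤ) = q.1 / (g:ℤ) := congrArg Prod.fst heq
        have h2 : p.2 / (g:ℤ) = q.2 / (g:ℤ) := congrArg Prod.snd heq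
        have hgz : (g:ℤ) ≠ 0 := by exact_mod_cast hgne
        apply Prod.ext
        · rw [← Int.ediv_mul_cancel hga, ← Int.ediv_mul_cancel hqa, h1]
        · rw [← Int.ediv_mul_cancel hgb, ← Int.ediv_mul_cancel hqb, h2]
    calc ((repSet m).filter (fun p => Int.gcd p.1 p.2 = g)).card ≤ (primSet m').card := hinj
    _ ≤ 4 * m'.divisors.card := primSet_card m' hm'1 hm'odd
    _ ≤ 4 * m.divisors.card := by
        apply Nat.mul_le_mul_left
        apply Finset.card_le_card
        apply Nat.divisors_subset_of_dvd hm0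
        exact Dvd.intro_left _ hmm'.symm
  calc ∑ g ∈ D, ((repSet m).filter (fun p => Int.gcd p.1 p.2 = g)).card
      ≤ ∑ g ∈ D, 4 * m.divisors.card := Finset.sum_le_sum hfib
  _ = D.card * (4 * m.divisors.card) := by rw [Finset.sum_const, smul_eq_mul]
  _ ≤ m.divisors.card * (4 * m.divisors.card) := by
      apply Nat.mul_le_mul_right
      apply Finset.card_le_card
      rw [hD]; exact Finset.filter_subset _ _
  _ = 4 * m.divisors.card ^ 2 := by ring

lemma repSet_card_le (m : ℕ) (hm : 1 ≤ m) : (repSet m).card ≤ 4 * m.divisors.card ^ 2 := by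
  induction m using Nat.strong_induction_on with
  | _ m ih =>
    rcases Nat.even_or_odd m with he | ho
    · obtain ⟨m', hm'⟩ := he
      have hm'' : m = 2 * m' := by omega
      have hm'1 : 1 ≤ m' := by omega
      have hcard : (repSet m).card = (repSet m').card := by rw [hm'']; exact repSet_two_mul m'
      have hlt : m' < m := by omega
      calc (repSet m).card = (repSet m').card := hcard
      _ ≤ 4 * m'.divisors.card ^ 2 := ih m' hlt hm'1
      _ ≤ 4 * m.divisors.card ^ 2 := by
          apply Nat.mul_le_mul_left
          apply Nat.pow_le_pow_left
          apply Finset.card_le_card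
          apply Nat.divisors_subset_of_dvd (by omega)
          exact ⟨2, by omega⟩
    · exact repSet_decomp m hm ho

noncomputable def latSet (n A : ℕ) : Finset (Fin n → ℤ) :=
  (Finset.Icc (fun _ => -(A:ℤ)) (fun _ => (A:ℤ))).filter fun x => ∑ i, (x i)^2 = (A:ℤ)

lemma mem_latSet {n A : ℕ} {x : Fin n → ℤ} : x ∈ latSet n A ↔ ∑ i, (x i)^2 = (A:ℤ) := by
  constructor
  · exact fun h => (Finset.mem_filter.mp h).2
  · intro h
    refine Finset.mem_filter.mpr ⟨?_, h⟩
    rw [Finset.mem_Icc]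
    constructor <;> intro i
    · have hsq : (x i)^2 ≤ (A:ℤ) := by
        rw [← h]
        exact Finset.single_le_sum (fun j _ => sq_nonneg (x j)) (Finset.mem_univ i)
      exact (sq_le_bounds hsq).1
    · have hsq : (x i)^2 ≤ (A:ℤ) := by
        rw [← h]
        exact Finset.single_le_sum (fun j _ => sq_nonneg (x j)) (Finset.mem_univ i)
      exact (sq_le_bounds hsq).2

lemma latSet_two_le (B : ℕ) : (latSet 2 B).card ≤ (repSet B).card := by
  apply Finset.card_le_card_of_injOn (fun x => (x 0, x 1))
  · intro x hx
    rw [Finset.mem_coe, mem_latSet] at hx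
    rw [Finset.mem_coe, mem_repSet]
    rw [Fin.sum_univ_two] at hx
    exact hx
  · intro x hx y hy heq
    funext i
    fin_cases i
    · exact congrArg Prod.fst heq
    · exact congrArg Prod.snd heq

lemma latSet_zero_card (n : ℕ) : (latSet n 0).card ≤ 1 := by
  apply le_trans (Finset.card_filter_le _ _)
  simp [Finset.Icc_self]

lemma latSet_count (K : ℝ) (A₀ : ℕ) (hK0 : 0 ≤ K) (hK : ∀ B ≤ A₀, ((latSet 2 B).card : ℝ) ≤ K) :
    ∀ n, ∀ A ≤ A₀, ((latSet (n+2) A).card : ℝ) ≤ (2 * (Nat.sqrt A₀ : ℝ) + 1) ^ n * K := by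
  intro n
  induction n with
  | zero => intro A hA; simpa using hK A hA
  | succ n ih =>
    intro A hA
    set r : ℕ := Nat.sqrt A₀ with hr
    have hmap : ∀ x ∈ latSet (n+3) A, x 0 ∈ Finset.Icc (-(r:ℤ)) (r:ℤ) := by
      intro x hx
      rw [mem_latSet] at hx
      have hsq : (x 0)^2 ≤ (A:ℤ) := by
        rw [← hx]
        exact Finset.single_le_sum (fun j _ => sq_nonneg (x j)) (Finset.mem_univ 0)
      have hnab : (x 0).natAbs ^ 2 ≤ A := by
        have h2 : (((x 0).natAbs : ℤ)) ^ 2 ≤ (A:ℤ) := by rw [Int.natAbs_sq]; exact hsq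
        exact_mod_cast h2
      have hle : (x 0).natAbs ≤ r := by
        rw [hr]
        exact le_trans (Nat.le_sqrt'.mpr hnab) (Nat.sqrt_le_sqrt hA)
      rw [Finset.mem_Icc]
      have habs : |x 0| ≤ (r:ℤ) := by
        rw [Int.abs_eq_natAbs]
        exact_mod_cast hle
      exact abs_le.mp habs
    have hcard : (latSet (n+3) A).card = ∑ k ∈ Finset.Icc (-(r:ℤ)) (r:ℤ),
        ((latSet (n+3) A).filter (fun x => x 0 = k)).card :=
      Finset.card_eq_sum_card_fiberwise hmap
    have hfib : ∀ k ∈ Finset.Icc (-(r:ℤ)) (r:ℤ),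
        (((latSet (n+3) A).filter (fun x => x 0 = k)).card : ℝ) ≤ (2 * (r:ℝ) + 1) ^ n * K := by
      intro k _
      rcases Finset.eq_empty_or_nonempty ((latSet (n+3) A).filter (fun x => x 0 = k)) with he | ⟨w, hw⟩
      · rw [he]
        simp only [Finset.card_empty, Nat.cast_zero]
        positivity
      · -- k² ≤ A
        obtain ⟨hwl, hwk⟩ := Finset.mem_filter.mp hw
        rw [mem_latSet] at hwl
        have hsq : k^2 ≤ (A:ℤ) := by
          rw [← hwl, ← hwk]
          exact Finset.single_le_sum (fun j _ => sq_nonneg (w j)) (Finset.mem_univ 0)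
        have hkA : k.natAbs ^ 2 ≤ A := by
          have h2 : ((k.natAbs : ℤ)) ^ 2 ≤ (A:ℤ) := by rw [Int.natAbs_sq]; exact hsq
          exact_mod_cast h2
        set B : ℕ := A - k.natAbs ^ 2 with hB
        have hBZ : ((B:ℕ):ℤ) = (A:ℤ) - k^2 := by
          rw [hB]
          push_cast [Nat.cast_sub hkA]
          rw [sq_abs]
        have hBA : B ≤ A₀ := le_trans (Nat.sub_le _ _) hA
        have hinj : (((latSet (n+3) A).filter (fun x => x 0 = k)).card : ℕ) ≤ (latSet (n+2) B).card := by
          apply Finset.card_le_card_of_injOn (fun x => Fin.tail x)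
          · intro x hx
            obtain ⟨hxl, hxk⟩ := Finset.mem_filter.mp hx
            show Fin.tail x ∈ latSet (n+2) B
            rw [mem_latSet] at hxl ⊢
            rw [Fin.sum_univ_succ] at hxl
            rw [hBZ]
            have : ∑ i : Fin (n+2), (Fin.tail x i)^2 = ∑ i : Fin (n+2), (x i.succ)^2 := rfl
            rw [this]
            rw [hxk] at hxl
            linarith
          · intro x hx y hy heq
            simp only [Finset.mem_coe, Finset.mem_filter] at hx hy
            have hx0 : x 0 = y 0 := by rw [hx.2, hy.2]
            calc x = Fin.cons (x 0) (Fin.tail x) := (Fin.cons_self_tail x).symm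
            _ = Fin.cons (y 0) (Fin.tail y) := by
                  rw [hx0]
                  have heq' : Fin.tail x = Fin.tail y := heq
                  rw [heq']
            _ = y := Fin.cons_self_tail y
        calc (((latSet (n+3) A).filter (fun x => x 0 = k)).card : ℝ)
            ≤ ((latSet (n+2) B).card : ℝ) := by exact_mod_cast hinj
        _ ≤ (2 * (r:ℝ) + 1) ^ n * K := ih B hBA
    have hIcc : ((Finset.Icc (-(r:ℤ)) (r:ℤ)).card : ℝ) = 2 * (r:ℝ) + 1 := by
      rw [Int.card_Icc]
      have : ((r:ℤ) + 1 - -(r:ℤ)) = 2*(r:ℤ)+1 := by ring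
      rw [this]
      have : ((2*(r:ℤ)+1).toNat : ℤ) = 2*(r:ℤ)+1 := Int.toNat_of_nonneg (by positivity)
      have h2 : ((2*(r:ℤ)+1).toNat : ℝ) = 2*(r:ℝ)+1 := by exact_mod_cast this
      exact h2
    calc ((latSet (n+1+2) A).card : ℝ)
        = ∑ k ∈ Finset.Icc (-(r:ℤ)) (r:ℤ),
            (((latSet (n+3) A).filter (fun x => x 0 = k)).card : ℝ) := by
          exact_mod_cast congrArg (Nat.cast : ℕ → ℝ) hcard
    _ ≤ ∑ _k ∈ Finset.Icc (-(r:ℤ)) (r:ℤ), (2 * (r:ℝ) + 1) ^ n * K := Finset.sum_le_sum hfib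
    _ = ((Finset.Icc (-(r:ℤ)) (r:ℤ)).card : ℝ) * ((2 * (r:ℝ) + 1) ^ n * K) := by
        rw [Finset.sum_const, nsmul_eq_mul]
    _ = (2 * (r:ℝ) + 1) ^ (n+1) * K := by rw [hIcc]; ring


lemma vol_le (s t : ℝ) (ht : 0 < t) :
    volume {x : ℝ | |x^2 - s| ≤ t} ≤
      ENNReal.ofReal (2 * (Real.sqrt (s+t) - Real.sqrt (s-t))) := by
  set a := Real.sqrt (s-t) with ha
  set b := Real.sqrt (s+t) with hb
  have hab : a ≤ b := Real.sqrt_le_sqrt (by linarith)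
  have hsub : {x : ℝ | |x^2 - s| ≤ t} ⊆ Set.Icc (-b) (-a) ∪ Set.Icc a b := by
    intro x hx
    simp only [Set.mem_setOf_eq, abs_le] at hx
    have hxb : |x| ≤ b := Real.abs_le_sqrt (by linarith)
    have hax : a ≤ |x| := by
      rw [← Real.sqrt_sq_eq_abs]
      exact Real.sqrt_le_sqrt (by linarith)
    rcases le_or_gt 0 x with hx0 | hx0
    · right
      rw [abs_of_nonneg hx0] at hxb hax
      exact ⟨hax, hxb⟩
    · left
      rw [abs_of_neg hx0] at hxb hax
      constructor <;> linarith
  calc volume {x : ℝ | |x^2 - s| ≤ t} ≤ volume (Set.Icc (-b) (-a) ∪ Set.Icc a b) :=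
        measure_mono hsub
  _ ≤ volume (Set.Icc (-b) (-a)) + volume (Set.Icc a b) := measure_union_le _ _
  _ = ENNReal.ofReal (b - a) + ENNReal.ofReal (b - a) := by
      rw [Real.volume_Icc, Real.volume_Icc, show -a - -b = b - a by ring]
  _ = ENNReal.ofReal (2 * (b - a)) := by
      rw [← ENNReal.ofReal_add (by linarith) (by linarith)]
      congr 1; ring

lemma sqrt_diff_le (s t : ℝ) (ht : 0 < t) :
    Real.sqrt (s+t) - Real.sqrt (s-t) ≤ Real.sqrt (2*t) := by
  rcases lt_or_ge (s - t) 0 with h | h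
  · have h1 : Real.sqrt (s-t) = 0 := Real.sqrt_eq_zero_of_nonpos h.le
    have h2 : Real.sqrt (s+t) ≤ Real.sqrt (2*t) := Real.sqrt_le_sqrt (by linarith)
    linarith
  · have key : Real.sqrt (s+t) ≤ Real.sqrt (s-t) + Real.sqrt (2*t) := by
      have h1 : s + t ≤ (Real.sqrt (s-t) + Real.sqrt (2*t))^2 := by
        have e1 : Real.sqrt (s-t) ^ 2 = s - t := Real.sq_sqrt h
        have e2 : Real.sqrt (2*t) ^ 2 = 2*t := Real.sq_sqrt (by linarith)
        have e3 : 0 ≤ Real.sqrt (s-t) * Real.sqrt (2*t) :=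
          mul_nonneg (Real.sqrt_nonneg _) (Real.sqrt_nonneg _)
        nlinarith
      calc Real.sqrt (s+t) ≤ Real.sqrt ((Real.sqrt (s-t) + Real.sqrt (2*t))^2) :=
            Real.sqrt_le_sqrt h1
      _ = Real.sqrt (s-t) + Real.sqrt (2*t) :=
            Real.sqrt_sq (by positivity)
    linarith

lemma sqrt_diff_far (s t : ℝ) (ht : 0 < t) (hs : 0 < s - t) :
    Real.sqrt (s+t) - Real.sqrt (s-t) ≤ 2*t / Real.sqrt (s-t) := by
  have ha : 0 < Real.sqrt (s-t) := Real.sqrt_pos.mpr hs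
  rw [le_div_iff₀ ha]
  have e1 : Real.sqrt (s-t) ^ 2 = s - t := Real.sq_sqrt hs.le
  have e2 : Real.sqrt (s+t) ^ 2 = s + t := Real.sq_sqrt (by nlinarith)
  have hab : Real.sqrt (s-t) ≤ Real.sqrt (s+t) := Real.sqrt_le_sqrt (by linarith)
  nlinarith [Real.sqrt_nonneg (s+t), Real.sqrt_nonneg (s-t)]

-- 1/√s ≤ 2√2 (√(s+1) − √s) for s ≥ 2
lemma inv_sqrt_telescope (s : ℝ) (hs : 2 ≤ s) :
    1 / Real.sqrt s ≤ 2 * Real.sqrt 2 * (Real.sqrt (s+1) - Real.sqrt s) := by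
  set u := Real.sqrt s with hu
  set w := Real.sqrt (s+1) with hw
  have hu2 : u^2 = s := Real.sq_sqrt (by linarith)
  have hw2 : w^2 = s+1 := Real.sq_sqrt (by linarith)
  have hupos : 0 < u := Real.sqrt_pos.mpr (by linarith)
  have hwpos : 0 < w := Real.sqrt_pos.mpr (by linarith)
  have hsq2 : Real.sqrt 2 ^ 2 = 2 := Real.sq_sqrt (by norm_num)
  have hsq2pos : 0 < Real.sqrt 2 := Real.sqrt_pos.mpr (by norm_num)
  have hwu : w ≤ Real.sqrt 2 * u := by
    have h1 : w^2 ≤ (Real.sqrt 2 * u)^2 := by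
      rw [hw2, mul_pow, hsq2, hu2]; linarith
    calc w = Real.sqrt (w^2) := (Real.sqrt_sq hwpos.le).symm
    _ ≤ Real.sqrt ((Real.sqrt 2 * u)^2) := Real.sqrt_le_sqrt h1
    _ = Real.sqrt 2 * u := Real.sqrt_sq (by positivity)
  have hdiff : (w - u) * (w + u) = 1 := by nlinarith
  rw [div_le_iff₀ hupos]
  -- goal: 1 ≤ 2√2 (w−u) u; since (w−u)(w+u) = 1, suffices w+u ≤ 2√2 u
  have hwu2 : w + u ≤ 2 * Real.sqrt 2 * u := by
    have h12 : (1:ℝ) ≤ Real.sqrt 2 := by nlinarith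
    calc w + u ≤ Real.sqrt 2 * u + u := by linarith
    _ ≤ 2 * Real.sqrt 2 * u := by nlinarith
  have hwugt : 0 ≤ w - u := by
    have : u ≤ w := Real.sqrt_le_sqrt (by linarith)
    linarith
  nlinarith

noncomputable def vfun (Cst T : ℝ) (A : ℕ) : ℝ :=
  if Cst - (A:ℝ) < -(1/T) then 0
  else if Cst - (A:ℝ) ≤ 2 then 2 * Real.sqrt 2 * Real.sqrt (1/T)
  else (16/T) * (Real.sqrt (Cst + 1 - A) - Real.sqrt (Cst - A))

lemma vfun_nonneg (Cst T : ℝ) (hT : 1 ≤ T) (A : ℕ) : 0 ≤ vfun Cst T A := by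
  have hT0 : 0 < T := by linarith
  unfold vfun
  split_ifs with h1 h2
  · exact le_rfl
  · positivity
  · apply mul_nonneg (by positivity)
    have : Real.sqrt (Cst - A) ≤ Real.sqrt (Cst + 1 - A) := Real.sqrt_le_sqrt (by linarith)
    linarith

lemma measure_term_le (Cst T cN2 : ℝ) (hT : 1 ≤ T) (A : ℕ) :
    volume {x : ℝ | |x^2 + (A:ℝ) - Cst| ≤ 1/T ∧ x^2 + (A:ℝ) ≤ cN2} ≤
      ENNReal.ofReal (vfun Cst T A) := by
  have hT0 : 0 < T := by linarith
  have ht : 0 < 1/T := by positivity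
  have ht1 : 1/T ≤ 1 := by rw [div_le_one hT0]; linarith
  set s : ℝ := Cst - (A:ℝ) with hs
  have hsub : {x : ℝ | |x^2 + (A:ℝ) - Cst| ≤ 1/T ∧ x^2 + (A:ℝ) ≤ cN2} ⊆
      {x : ℝ | |x^2 - s| ≤ 1/T} := by
    intro x hx
    have h1 := hx.1
    simp only [Set.mem_setOf_eq]
    rw [show x^2 - s = x^2 + (A:ℝ) - Cst by rw [hs]; ring]
    exact h1
  unfold vfun
  rw [← hs]
  split_ifs with h1 h2
  · -- empty set
    have hempty : {x : ℝ | |x^2 + (A:ℝ) - Cst| ≤ 1/T ∧ x^2 + (A:ℝ) ≤ cN2} = ∅ := by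
      ext x
      simp only [Set.mem_setOf_eq, Set.mem_empty_iff_false, iff_false]
      intro hx
      have := abs_le.mp hx.1
      nlinarith [sq_nonneg x, this.1]
    rw [hempty]
    simp
  · calc volume {x : ℝ | |x^2 + (A:ℝ) - Cst| ≤ 1/T ∧ x^2 + (A:ℝ) ≤ cN2}
        ≤ volume {x : ℝ | |x^2 - s| ≤ 1/T} := measure_mono hsub
    _ ≤ ENNReal.ofReal (2 * (Real.sqrt (s + 1/T) - Real.sqrt (s - 1/T))) := vol_le s (1/T) ht
    _ ≤ ENNReal.ofReal (2 * Real.sqrt 2 * Real.sqrt (1/T)) := by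
        apply ENNReal.ofReal_le_ofReal
        have := sqrt_diff_le s (1/T) ht
        have h2' : Real.sqrt (2 * (1/T)) = Real.sqrt 2 * Real.sqrt (1/T) :=
          Real.sqrt_mul (by norm_num) _
        rw [h2'] at this
        linarith
  · -- far case : s > 2
    push_neg at h1 h2
    have hst : 0 < s - 1/T := by linarith
    have hs2 : 2 ≤ s := by linarith
    calc volume {x : ℝ | |x^2 + (A:ℝ) - Cst| ≤ 1/T ∧ x^2 + (A:ℝ) ≤ cN2}
        ≤ volume {x : ℝ | |x^2 - s| ≤ 1/T} := measure_mono hsub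
    _ ≤ ENNReal.ofReal (2 * (Real.sqrt (s + 1/T) - Real.sqrt (s - 1/T))) := vol_le s (1/T) ht
    _ ≤ ENNReal.ofReal ((16/T) * (Real.sqrt (Cst + 1 - A) - Real.sqrt (Cst - A))) := by
        apply ENNReal.ofReal_le_ofReal
        have hfar := sqrt_diff_far s (1/T) ht hst
        -- 1/√(s−1/T) ≤ √2/√s
        have hs0 : 0 < s := by linarith
        have hsq : 0 < Real.sqrt s := Real.sqrt_pos.mpr hs0
        have hsqst : 0 < Real.sqrt (s - 1/T) := Real.sqrt_pos.mpr hst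
        have hstep : 1 / Real.sqrt (s - 1/T) ≤ Real.sqrt 2 / Real.sqrt s := by
          rw [div_le_div_iff₀ hsqst hsq]
          have : Real.sqrt s ≤ Real.sqrt 2 * Real.sqrt (s - 1/T) := by
            rw [← Real.sqrt_mul (by norm_num)]
            apply Real.sqrt_le_sqrt
            linarith
          linarith
        have htel := inv_sqrt_telescope s hs2
        have hsqrt2 : (0:ℝ) < Real.sqrt 2 := Real.sqrt_pos.mpr (by norm_num)
        have hchain : 2 * (Real.sqrt (s + 1/T) - Real.sqrt (s - 1/T)) ≤
            (16/T) * (Real.sqrt (s + 1) - Real.sqrt s) := by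
          have e1 : 2 * (Real.sqrt (s + 1/T) - Real.sqrt (s - 1/T)) ≤ 2 * (2*(1/T) / Real.sqrt (s - 1/T)) := by
            linarith
          have e2 : 2 * (2*(1/T) / Real.sqrt (s - 1/T)) = (4/T) * (1 / Real.sqrt (s - 1/T)) := by
            ring
          have e3 : (4/T) * (1 / Real.sqrt (s - 1/T)) ≤ (4/T) * (Real.sqrt 2 / Real.sqrt s) := by
            apply mul_le_mul_of_nonneg_left hstep (by positivity)
          have e4 : (4/T) * (Real.sqrt 2 / Real.sqrt s) = (4*Real.sqrt 2/T) * (1/Real.sqrt s) := by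
            ring
          have e5 : (4*Real.sqrt 2/T) * (1/Real.sqrt s) ≤
              (4*Real.sqrt 2/T) * (2 * Real.sqrt 2 * (Real.sqrt (s+1) - Real.sqrt s)) := by
            apply mul_le_mul_of_nonneg_left htel (by positivity)
          have e6 : (4*Real.sqrt 2/T) * (2 * Real.sqrt 2 * (Real.sqrt (s+1) - Real.sqrt s)) =
              (8 * (Real.sqrt 2 * Real.sqrt 2) / T) * (Real.sqrt (s+1) - Real.sqrt s) := by
            ring
          have e7 : Real.sqrt 2 * Real.sqrt 2 = 2 := Real.mul_self_sqrt (by norm_num)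
          rw [e7] at e6
          calc 2 * (Real.sqrt (s + 1/T) - Real.sqrt (s - 1/T)) ≤ (4/T) * (1 / Real.sqrt (s - 1/T)) := by
                rw [← e2]; exact e1
          _ ≤ (4/T) * (Real.sqrt 2 / Real.sqrt s) := e3
          _ = (4*Real.sqrt 2/T) * (1/Real.sqrt s) := e4
          _ ≤ (4*Real.sqrt 2/T) * (2 * Real.sqrt 2 * (Real.sqrt (s+1) - Real.sqrt s)) := e5
          _ = (8 * 2 / T) * (Real.sqrt (s+1) - Real.sqrt s) := e6
          _ = (16/T) * (Real.sqrt (s+1) - Real.sqrt s) := by ring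
        have harg1 : s + 1 = Cst + 1 - (A:ℝ) := by rw [hs]; ring
        have harg2 : s = Cst - (A:ℝ) := hs
        rw [harg1, harg2] at hchain
        exact hchain

lemma vsum_le (Cst T : ℝ) (hT : 1 ≤ T) (M : ℕ) :
    ∑ A ∈ Finset.range M, vfun Cst T A ≤
      8 * Real.sqrt 2 * Real.sqrt (1/T) + (16/T) * Real.sqrt (Cst + 1) := by
  have hT0 : 0 < T := by linarith
  classical
  set P : ℕ → Prop := fun A => (-(1/T) ≤ Cst - (A:ℝ) ∧ Cst - (A:ℝ) ≤ 2) with hP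
  set c₁ : ℝ := 2 * Real.sqrt 2 * Real.sqrt (1/T) with hc₁
  have hc₁nn : 0 ≤ c₁ := by rw [hc₁]; positivity
  set w₂ : ℕ → ℝ := fun A => (16/T) * (Real.sqrt (Cst + 1 - A) - Real.sqrt (Cst - A)) with hw₂
  have hw₂nn : ∀ A : ℕ, 0 ≤ w₂ A := by
    intro A
    apply mul_nonneg (by positivity)
    have : Real.sqrt (Cst - A) ≤ Real.sqrt (Cst + 1 - A) := Real.sqrt_le_sqrt (by linarith)
    linarith
  have hle : ∀ A ∈ Finset.range M, vfun Cst T A ≤ (if P A then c₁ else 0) + w₂ A := by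
    intro A _
    have hw1nn : (0:ℝ) ≤ (if P A then c₁ else 0) := by split_ifs; exacts [hc₁nn, le_rfl]
    unfold vfun
    by_cases h1 : Cst - (A:ℝ) < -(1/T)
    · rw [if_pos h1]
      exact add_nonneg hw1nn (hw₂nn A)
    · rw [if_neg h1]
      by_cases h2 : Cst - (A:ℝ) ≤ 2
      · rw [if_pos h2]
        have hcond : P A := ⟨by push_neg at h1; linarith, h2⟩
        rw [if_pos hcond]
        exact le_add_of_le_of_nonneg le_rfl (hw₂nn A)
      · rw [if_neg h2]
        exact le_add_of_nonneg_of_le hw1nn le_rfl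
  calc ∑ A ∈ Finset.range M, vfun Cst T A
      ≤ ∑ A ∈ Finset.range M, ((if P A then c₁ else 0) + w₂ A) := Finset.sum_le_sum hle
  _ = (∑ A ∈ Finset.range M, if P A then c₁ else 0) + ∑ A ∈ Finset.range M, w₂ A :=
      Finset.sum_add_distrib
  _ ≤ 8 * Real.sqrt 2 * Real.sqrt (1/T) + (16/T) * Real.sqrt (Cst + 1) := by
      apply add_le_add
      · -- middle count
        rw [← Finset.sum_filter]
        rw [Finset.sum_const, nsmul_eq_mul]
        have hcard : ((Finset.range M).filter P).card ≤ 4 := by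
          have hinj : ((Finset.range M).filter P).card
              ≤ (Finset.Icc (⌈Cst⌉ - 2) (⌈Cst⌉ + 1)).card := by
            apply Finset.card_le_card_of_injOn (fun A : ℕ => (A:ℤ))
            · intro A hA
              obtain ⟨_, h1, h2⟩ := Finset.mem_filter.mp hA
              simp only [Finset.mem_coe, Finset.mem_Icc]
              constructor
              · have hA2 : Cst - 2 ≤ (A:ℝ) := by linarith
                have hceil : ⌈Cst - 2⌉ ≤ (A:ℤ) := Int.ceil_le.mpr (by exact_mod_cast hA2)
                have heq2 : ⌈Cst - 2⌉ = ⌈Cst⌉ - 2 := by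
                  rw [show (2:ℝ) = ((2:ℤ):ℝ) by norm_num, Int.ceil_sub_intCast]
                omega
              · have hT1 : 1/T ≤ 1 := by rw [div_le_one hT0]; linarith
                have hub : (A:ℝ) ≤ Cst + 1 := by linarith
                have h2' : (A:ℝ) ≤ (⌈Cst⌉:ℝ) + 1 := le_trans hub (by linarith [Int.le_ceil Cst])
                exact_mod_cast h2'
            · intro a _ b _ hab
              have hab' : (a:ℤ) = (b:ℤ) := hab
              exact_mod_cast hab'
          have hIcc : (Finset.Icc (⌈Cst⌉ - 2) (⌈Cst⌉ + 1)).card = 4 := by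
            rw [Int.card_Icc]
            omega
          omega
        calc (((Finset.range M).filter P).card : ℝ) * c₁ ≤ 4 * c₁ := by
              apply mul_le_mul_of_nonneg_right _ hc₁nn
              exact_mod_cast hcard
        _ = 8 * Real.sqrt 2 * Real.sqrt (1/T) := by rw [hc₁]; ring
      · -- telescoping
        have htel : ∑ A ∈ Finset.range M, (Real.sqrt (Cst + 1 - A) - Real.sqrt (Cst - A)) =
            Real.sqrt (Cst + 1) - Real.sqrt (Cst + 1 - M) := by
          calc ∑ A ∈ Finset.range M, (Real.sqrt (Cst + 1 - A) - Real.sqrt (Cst - A))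
              = ∑ A ∈ Finset.range M, ((fun i : ℕ => -Real.sqrt (Cst + 1 - (i:ℝ))) (A+1)
                  - (fun i : ℕ => -Real.sqrt (Cst + 1 - (i:ℝ))) A) := by
                apply Finset.sum_congr rfl
                intro A _
                have harg : Cst + 1 - ((A+1 : ℕ):ℝ) = Cst - (A:ℝ) := by push_cast; ring
                simp only
                rw [harg]
                ring
          _ = -Real.sqrt (Cst + 1 - M) - (-Real.sqrt (Cst + 1 - 0)) := by
                rw [Finset.sum_range_sub (fun i : ℕ => -Real.sqrt (Cst + 1 - (i:ℝ))) M]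
                norm_num
          _ = Real.sqrt (Cst + 1) - Real.sqrt (Cst + 1 - M) := by
                rw [show Cst + 1 - (0:ℝ) = Cst + 1 by ring]
                ring
        have hfac : ∑ A ∈ Finset.range M, w₂ A =
            (16/T) * ∑ A ∈ Finset.range M, (Real.sqrt (Cst + 1 - A) - Real.sqrt (Cst - A)) := by
          rw [Finset.mul_sum]
        rw [hfac, htel]
        have h1 : Real.sqrt (Cst + 1) - Real.sqrt (Cst + 1 - M) ≤ Real.sqrt (Cst + 1) := by
          have := Real.sqrt_nonneg (Cst + 1 - (M:ℝ))
          linarith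
        apply mul_le_mul_of_nonneg_left h1 (by positivity)

set_option maxHeartbeats 1000000 in
/-- measure estimate on ℝ × ℤⁿ for the level set of |ξ|². -/
theorem stmt6 (n : ℕ) (c ε : ℝ) (hn : 2 ≤ n) (hc : 0 < c) (hε : 0 < ε) :
    ∃ C > (0:ℝ), ∀ N T Cst : ℝ, 1 ≤ N → 1 ≤ T → |Cst| ≤ c * N^2 →
      ∑' ξt : Fin n → ℤ,
          volume {ξ₁ : ℝ | |ξ₁^2 + (∑ i, ((ξt i : ℝ))^2) - Cst| ≤ 1/T ∧
            ξ₁^2 + (∑ i, ((ξt i : ℝ))^2) ≤ (c*N)^2} ≤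
        ENNReal.ofReal (C * N ^ ε *
          (T ^ (-(1:ℝ)/2) * N ^ ((n:ℝ) - 2) + T⁻¹ * N ^ ((n:ℝ) - 1))) := by
  have hε4 : 0 < ε/4 := by linarith
  obtain ⟨Kd, hKd1, hKd⟩ := divisor_bound (ε/4) hε4
  obtain ⟨m, hm⟩ : ∃ m, n = m + 2 := ⟨n - 2, by omega⟩
  set C₁ : ℝ := (2*c+1)^m * (4*Kd^2*(max 1 c)^ε + 1) with hC₁
  have hC₁pos : 0 < C₁ := by positivity
  set C : ℝ := C₁ * (8*Real.sqrt 2 + 16*Real.sqrt (c+1)) with hC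
  have hCpos : 0 < C := by positivity
  refine ⟨C, hCpos, ?_⟩
  intro N T Cst hN hT hCst
  have hN0 : 0 < N := lt_of_lt_of_le zero_lt_one hN
  have hT0 : 0 < T := lt_of_lt_of_le zero_lt_one hT
  have hcN : 0 < c*N := by positivity
  set A₀ : ℕ := ⌊(c*N)^2⌋₊ with hA₀
  set M : ℕ := A₀ + 1 with hM
  set K : ℝ := 4*Kd^2*((c*N)^ε) + 1 with hK
  have hK0 : 0 ≤ K := by positivity
  have hNε1 : (1:ℝ) ≤ N^ε := by
    calc (1:ℝ) = 1^ε := (Real.one_rpow ε).symm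
    _ ≤ N^ε := Real.rpow_le_rpow zero_le_one hN hε.le
  have hA₀le : ((A₀:ℕ):ℝ) ≤ (c*N)^2 := Nat.floor_le (by positivity)
  have hK2 : ∀ B, B ≤ A₀ → ((latSet 2 B).card : ℝ) ≤ K := by
    intro B hB
    rcases Nat.eq_zero_or_pos B with rfl | hB1
    · have h1 : ((latSet 2 0).card : ℝ) ≤ 1 := by exact_mod_cast latSet_zero_card 2
      have h2 : (0:ℝ) ≤ 4*Kd^2*((c*N)^ε) := by positivity
      rw [hK]; linarith
    · have hd := hKd B hB1
      have hcard : ((latSet 2 B).card : ℝ) ≤ 4 * ((B.divisors.card : ℝ))^2 := by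
        have h1 : (latSet 2 B).card ≤ 4 * B.divisors.card ^ 2 :=
          le_trans (latSet_two_le B) (repSet_card_le B hB1)
        exact_mod_cast h1
      have hBpos : (0:ℝ) < B := by exact_mod_cast hB1
      have hd2 : ((B.divisors.card:ℝ))^2 ≤ Kd^2 * (B:ℝ)^(ε/2) := by
        have h1 : ((B.divisors.card:ℝ))^2 ≤ (Kd * (B:ℝ)^(ε/4))^2 :=
          pow_le_pow_left₀ (by positivity) hd 2
        rw [mul_pow] at h1
        have h2 : ((B:ℝ)^(ε/4))^2 = (B:ℝ)^(ε/2) := by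
          rw [← Real.rpow_natCast ((B:ℝ)^(ε/4)) 2, ← Real.rpow_mul hBpos.le,
            show (ε/4) * ((2:ℕ):ℝ) = ε/2 by push_cast; ring]
        rw [h2] at h1
        exact h1
      have hBle : (B:ℝ)^(ε/2) ≤ (c*N)^ε := by
        have hBA : (B:ℝ) ≤ (c*N)^2 := by
          have h1 : (B:ℝ) ≤ (A₀:ℝ) := by exact_mod_cast hB
          linarith
        calc (B:ℝ)^(ε/2) ≤ ((c*N)^2)^(ε/2) :=
              Real.rpow_le_rpow (by positivity) hBA (by linarith)
        _ = (c*N)^ε := by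
            rw [← Real.rpow_natCast (c*N) 2, ← Real.rpow_mul hcN.le,
              show ((2:ℕ):ℝ) * (ε/2) = ε by push_cast; ring]
      have hfin : ((latSet 2 B).card : ℝ) ≤ 4 * (Kd^2 * ((c*N)^ε)) := by
        calc ((latSet 2 B).card : ℝ) ≤ 4 * ((B.divisors.card : ℝ))^2 := hcard
        _ ≤ 4 * (Kd^2 * (B:ℝ)^(ε/2)) := by
            apply mul_le_mul_of_nonneg_left hd2 (by norm_num)
        _ ≤ 4 * (Kd^2 * ((c*N)^ε)) := by
            apply mul_le_mul_of_nonneg_left _ (by norm_num)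
            exact mul_le_mul_of_nonneg_left hBle (by positivity)
      rw [hK]
      nlinarith
  have hcount := latSet_count K A₀ hK0 hK2 m
  set Rmax : ℝ := C₁ * N^((n:ℝ)-2) * N^ε with hRmax
  have hnm : ((n:ℝ) - 2) = ((m:ℕ):ℝ) := by rw [hm]; push_cast; ring
  have hsqrtA₀ : (2*(Nat.sqrt A₀ : ℝ) + 1) ≤ (2*c+1)*N := by
    have h2 : ((Nat.sqrt A₀ : ℝ))^2 ≤ (c*N)^2 := by
      have h3 : ((Nat.sqrt A₀)^2 : ℕ) ≤ A₀ := Nat.sqrt_le' A₀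
      have h4 : (((Nat.sqrt A₀)^2 : ℕ) : ℝ) ≤ (A₀:ℝ) := by exact_mod_cast h3
      push_cast at h4
      linarith
    have h4 : (Nat.sqrt A₀ : ℝ) ≤ c*N := by
      have h5 : (0:ℝ) ≤ (Nat.sqrt A₀ : ℝ) := by positivity
      nlinarith
    nlinarith
  have hlat : ∀ A : ℕ, A ≤ A₀ → ((latSet n A).card : ℝ) ≤ Rmax := by
    intro A hA
    have h1 := hcount A hA
    have heq : (latSet n A).card = (latSet (m+2) A).card := by rw [hm]
    rw [show ((latSet n A).card : ℝ) = ((latSet (m+2) A).card : ℝ) by rw [heq]]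
    have hKle : K ≤ (4*Kd^2*(max 1 c)^ε + 1) * N^ε := by
      have h2 : (c*N)^ε = c^ε * N^ε := Real.mul_rpow hc.le hN0.le
      have h3 : c^ε ≤ (max 1 c)^ε := Real.rpow_le_rpow hc.le (le_max_right 1 c) hε.le
      have h4 : (c*N)^ε ≤ (max 1 c)^ε * N^ε := by
        rw [h2]
        apply mul_le_mul_of_nonneg_right h3 (by positivity)
      rw [hK]
      have h5 : 4*Kd^2*((c*N)^ε) ≤ 4*Kd^2*((max 1 c)^ε * N^ε) := by
        apply mul_le_mul_of_nonneg_left h4 (by positivity)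
      nlinarith
    have hpow : (2 * (Nat.sqrt A₀ : ℝ) + 1) ^ m ≤ ((2*c+1)*N) ^ m :=
      pow_le_pow_left₀ (by positivity) hsqrtA₀ m
    calc ((latSet (m+2) A).card : ℝ) ≤ (2 * (Nat.sqrt A₀ : ℝ) + 1) ^ m * K := h1
    _ ≤ ((2*c+1)*N) ^ m * ((4*Kd^2*(max 1 c)^ε + 1) * N^ε) := by
        apply mul_le_mul hpow hKle hK0 (by positivity)
    _ = Rmax := by
        rw [hRmax, hC₁, mul_pow, hnm, Real.rpow_natCast]
        ring
  -- measure side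
  rw [ENNReal.tsum_eq_iSup_sum]
  apply iSup_le
  intro F
  classical
  set AN : (Fin n → ℤ) → ℕ := fun ξt => (∑ i, (ξt i)^2).toNat with hANdef
  have hANcast : ∀ ξt : Fin n → ℤ, ((AN ξt : ℕ) : ℝ) = ∑ i, ((ξt i : ℝ))^2 := by
    intro ξt
    have h0 : (0:ℤ) ≤ ∑ i, (ξt i)^2 := Finset.sum_nonneg (fun i _ => sq_nonneg _)
    have h1 : ((AN ξt : ℕ) : ℤ) = ∑ i, (ξt i)^2 := Int.toNat_of_nonneg h0
    have h2 : ((AN ξt : ℕ) : ℝ) = ((∑ i, (ξt i)^2 : ℤ) : ℝ) := by exact_mod_cast h1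
    rw [h2]
    push_cast
    rfl
  set Vol : (Fin n → ℤ) → ENNReal := fun ξt =>
    volume {ξ₁ : ℝ | |ξ₁^2 + (∑ i, ((ξt i : ℝ))^2) - Cst| ≤ 1/T ∧
      ξ₁^2 + (∑ i, ((ξt i : ℝ))^2) ≤ (c*N)^2} with hVol
  have hvol : ∀ ξt : Fin n → ℤ, Vol ξt ≤ ENNReal.ofReal (vfun Cst T (AN ξt)) := by
    intro ξt
    have h := measure_term_le Cst T ((c*N)^2) hT (AN ξt)
    rw [hANcast ξt] at h
    exact h
  have hzero : ∀ ξt : Fin n → ℤ, ¬ (AN ξt < M) → Vol ξt = 0 := by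
    intro ξt hξt
    have hgt : (c*N)^2 < ((AN ξt : ℕ) : ℝ) := by
      have h1 : A₀ < AN ξt := by omega
      exact (Nat.floor_lt (by positivity)).mp h1
    rw [hVol]
    convert measure_empty
    · ext x
      simp only [Set.mem_setOf_eq, Set.mem_empty_iff_false, iff_false]
      intro hx
      have h2 := hx.2
      rw [← hANcast ξt] at h2
      nlinarith [sq_nonneg x]
    · infer_instance
  have hfibsub : ∀ A : ℕ, (F.filter (fun ξt => AN ξt < M)).filter (fun ξt => AN ξt = A)
      ⊆ latSet n A := by
    intro A ξt hξt
    obtain ⟨_, hA⟩ := Finset.mem_filter.mp hξt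
    rw [mem_latSet]
    have h0 : (0:ℤ) ≤ ∑ i, (ξt i)^2 := Finset.sum_nonneg (fun i _ => sq_nonneg _)
    have h1 : ((AN ξt : ℕ) : ℤ) = ∑ i, (ξt i)^2 := Int.toNat_of_nonneg h0
    rw [← h1, hA]
  calc ∑ ξt ∈ F, Vol ξt
      = ∑ ξt ∈ F.filter (fun ξt => AN ξt < M), Vol ξt := by
        symm
        apply Finset.sum_subset (Finset.filter_subset _ _)
        intro x hx hnx
        apply hzero
        intro hlt
        exact hnx (Finset.mem_filter.mpr ⟨hx, hlt⟩)
  _ = ∑ A ∈ Finset.range M, ∑ ξt ∈ (F.filter (fun ξt => AN ξt < M)).filter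
        (fun ξt => AN ξt = A), Vol ξt := by
        symm
        apply Finset.sum_fiberwise_of_maps_to
        intro x hx
        exact Finset.mem_range.mpr (Finset.mem_filter.mp hx).2
  _ ≤ ∑ A ∈ Finset.range M, ENNReal.ofReal (Rmax * vfun Cst T A) := by
        apply Finset.sum_le_sum
        intro A hA
        have hAA₀ : A ≤ A₀ := by
          have := Finset.mem_range.mp hA
          omega
        have hstep1 : ∑ ξt ∈ (F.filter (fun ξt => AN ξt < M)).filter (fun ξt => AN ξt = A), Vol ξt
            ≤ ((latSet n A).card : ENNReal) * ENNReal.ofReal (vfun Cst T A) := by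
          calc ∑ ξt ∈ (F.filter (fun ξt => AN ξt < M)).filter (fun ξt => AN ξt = A), Vol ξt
              ≤ ∑ _ξt ∈ (F.filter (fun ξt => AN ξt < M)).filter (fun ξt => AN ξt = A),
                ENNReal.ofReal (vfun Cst T A) := by
                apply Finset.sum_le_sum
                intro ξt hξt
                have hA' : AN ξt = A := (Finset.mem_filter.mp hξt).2
                have := hvol ξt
                rw [hA'] at this
                exact this
          _ = (((F.filter (fun ξt => AN ξt < M)).filter (fun ξt => AN ξt = A)).card : ENNReal)
                * ENNReal.ofReal (vfun Cst T A) := by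
                rw [Finset.sum_const, nsmul_eq_mul]
          _ ≤ ((latSet n A).card : ENNReal) * ENNReal.ofReal (vfun Cst T A) := by
                apply mul_le_mul_left
                have := Finset.card_le_card (hfibsub A)
                exact_mod_cast Nat.cast_le.mpr this
        apply le_trans hstep1
        have hcast : ((latSet n A).card : ENNReal) = ENNReal.ofReal ((latSet n A).card : ℝ) := by
          rw [ENNReal.ofReal_natCast]
        rw [hcast, ← ENNReal.ofReal_mul (by positivity)]
        apply ENNReal.ofReal_le_ofReal
        apply mul_le_mul_of_nonneg_right (hlat A hAA₀) (vfun_nonneg Cst T hT A)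
  _ = ENNReal.ofReal (∑ A ∈ Finset.range M, Rmax * vfun Cst T A) := by
        rw [ENNReal.ofReal_sum_of_nonneg]
        intro A _
        have h1 : (0:ℝ) ≤ Rmax := by
          rw [hRmax]; positivity
        exact mul_nonneg h1 (vfun_nonneg Cst T hT A)
  _ ≤ ENNReal.ofReal (C * N ^ ε *
        (T ^ (-(1:ℝ)/2) * N ^ ((n:ℝ) - 2) + T⁻¹ * N ^ ((n:ℝ) - 1))) := by
        apply ENNReal.ofReal_le_ofReal
        rw [← Finset.mul_sum]
        have hs := vsum_le Cst T hT M
        have hRnn : (0:ℝ) ≤ Rmax := by rw [hRmax]; positivity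
        have hsqT : Real.sqrt (1/T) = T ^ (-(1:ℝ)/2) := by
          rw [Real.sqrt_eq_rpow, one_div, Real.inv_rpow hT0.le, ← Real.rpow_neg hT0.le]
          norm_num
        have hsqrtC : Real.sqrt (Cst + 1) ≤ Real.sqrt (c+1) * N := by
          have h1 : Cst ≤ c*N^2 := le_trans (le_abs_self Cst) hCst
          have hN2 : 1 ≤ N^2 := by nlinarith
          have h2 : Cst + 1 ≤ (c+1)*N^2 := by nlinarith
          calc Real.sqrt (Cst + 1) ≤ Real.sqrt ((c+1)*N^2) := Real.sqrt_le_sqrt h2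
          _ = Real.sqrt (c+1) * N := by
              rw [Real.sqrt_mul (by linarith), Real.sqrt_sq hN0.le]
        have hNN : N^((n:ℝ)-2) * N = N^((n:ℝ)-1) := by
          nth_rewrite 2 [show N = N^(1:ℝ) by rw [Real.rpow_one]]
          rw [← Real.rpow_add hN0, show (n:ℝ)-2+1 = (n:ℝ)-1 by ring]
        have hXnn : (0:ℝ) ≤ N^ε*(T^(-(1:ℝ)/2)*N^((n:ℝ)-2)) := by positivity
        have hYnn : (0:ℝ) ≤ N^ε*(T⁻¹*N^((n:ℝ)-1)) := by positivity
        have hs2 : ∑ A ∈ Finset.range M, vfun Cst T A ≤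
            8*Real.sqrt 2*(T^(-(1:ℝ)/2)) + (16/T)*(Real.sqrt (c+1)*N) := by
          have h16 : (16/T)*Real.sqrt (Cst+1) ≤ (16/T)*(Real.sqrt (c+1)*N) :=
            mul_le_mul_of_nonneg_left hsqrtC (by positivity)
          rw [hsqT] at hs
          linarith
        have hexp : Rmax * (8*Real.sqrt 2*(T^(-(1:ℝ)/2)) + (16/T)*(Real.sqrt (c+1)*N)) =
            C₁*(8*Real.sqrt 2)*(N^ε*(T^(-(1:ℝ)/2)*N^((n:ℝ)-2)))
              + C₁*(16*Real.sqrt (c+1))*(N^ε*(T⁻¹*(N^((n:ℝ)-2)*N))) := by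
          rw [hRmax]
          field_simp
        rw [hNN] at hexp
        have hcoef1 : C₁*(8*Real.sqrt 2) ≤ C := by
          rw [hC]
          have : (0:ℝ) ≤ 16*Real.sqrt (c+1) := by positivity
          nlinarith
        have hcoef2 : C₁*(16*Real.sqrt (c+1)) ≤ C := by
          rw [hC]
          have : (0:ℝ) ≤ 8*Real.sqrt 2 := by positivity
          nlinarith
        calc Rmax * (∑ A ∈ Finset.range M, vfun Cst T A)
            ≤ Rmax * (8*Real.sqrt 2*(T^(-(1:ℝ)/2)) + (16/T)*(Real.sqrt (c+1)*N)) :=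
              mul_le_mul_of_nonneg_left hs2 hRnn
        _ = C₁*(8*Real.sqrt 2)*(N^ε*(T^(-(1:ℝ)/2)*N^((n:ℝ)-2)))
              + C₁*(16*Real.sqrt (c+1))*(N^ε*(T⁻¹*N^((n:ℝ)-1))) := hexp
        _ ≤ C*(N^ε*(T^(-(1:ℝ)/2)*N^((n:ℝ)-2))) + C*(N^ε*(T⁻¹*N^((n:ℝ)-1))) := by
            apply add_le_add
            · exact mul_le_mul_of_nonneg_right hcoef1 hXnn
            · exact mul_le_mul_of_nonneg_right hcoef2 hYnn
        _ = C * N ^ ε * (T ^ (-(1:ℝ)/2) * N ^ ((n:ℝ) - 2) + T⁻¹ * N ^ ((n:ℝ) - 1)) := by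
            ring
end
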